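/- arXiv:1211.2211 — 12 statements merged into one kernel-verified Lean document; each statement's English description precedes it below -/
import Mathlib

section
/- Let X and Y be normed spaces, ε > 0, and f : X → Y a linear map with ‖f‖ ≤ 1 which is an ε-isometry, i.e. (1−ε)‖x‖ ≤ ‖f x‖ ≤ ‖x‖ for all x. Define on X × Y the function ‖(x,y)‖_f = inf { ‖x−w‖_X + ‖y + f w‖_Y + ε‖w‖_X : w ∈ X }. Then ‖·‖_f is a norm on X × Y. -/
/-!
`‖·‖_f` is the quotient of the seminorm `(a, b, w) ↦ ‖a‖ + ‖b‖ + ε‖w‖` on `X × Y × X` under the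
surjection `(a, b, w) ↦ (a + w, b - f w)`, so it is a seminorm: `w ↦ a • w` reindexes the
competitors for `a • p`, and `w₁ + w₂` is a competitor for `p + q`. It is definite because
`ε‖x‖ ≤ max ε 1 · ‖(x, y)‖_f` and `ε‖y‖ ≤ max ε ‖f‖ · ‖(x, y)‖_f`.
-/

section Seminormed

variable {X Y : Type*} [SeminormedAddCommGroup X] [NormedSpace ℝ X]
  [SeminormedAddCommGroup Y] [NormedSpace ℝ Y]

def graphCost (f : X →L[ℝ] Y) (ε : ℝ) (p : X × Y) (w : X) : ℝ :=
  ‖p.1 - w‖ + ‖p.2 + f w‖ + ε * ‖w‖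

noncomputable def graphNorm (f : X →L[ℝ] Y) (ε : ℝ) (p : X × Y) : ℝ :=
  ⨅ w, graphCost f ε p w

variable (f : X →L[ℝ] Y) {ε : ℝ}

theorem graphCost_nonneg (hε : 0 ≤ ε) (p : X × Y) (w : X) : 0 ≤ graphCost f ε p w := by
  unfold graphCost; positivity

theorem graphNorm_le_graphCost (hε : 0 ≤ ε) (p : X × Y) (w : X) :
    graphNorm f ε p ≤ graphCost f ε p w :=
  ciInf_le ⟨0, Set.forall_mem_range.2 (graphCost_nonneg f hε p)⟩ w

theorem graphNorm_nonneg (hε : 0 ≤ ε) (p : X × Y) : 0 ≤ graphNorm f ε p :=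
  le_ciInf (graphCost_nonneg f hε p)

theorem graphNorm_zero (hε : 0 ≤ ε) : graphNorm f ε 0 = 0 :=
  le_antisymm (by simpa [graphCost] using graphNorm_le_graphCost f hε 0 0)
    (graphNorm_nonneg f hε 0)

theorem graphCost_smul (a : ℝ) (p : X × Y) (w : X) :
    graphCost f ε (a • p) (a • w) = |a| * graphCost f ε p w := by
  simp only [graphCost, Prod.smul_fst, Prod.smul_snd, map_smul, ← smul_sub, ← smul_add,
    norm_smul, Real.norm_eq_abs]
  ring

theorem graphNorm_smul (hε : 0 ≤ ε) (a : ℝ) (p : X × Y) :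
    graphNorm f ε (a • p) = |a| * graphNorm f ε p := by
  rcases eq_or_ne a 0 with rfl | ha
  · simp [graphNorm_zero f hε]
  calc graphNorm f ε (a • p) = ⨅ w, graphCost f ε (a • p) (a • w) :=
        (Equiv.smulRight ha).iInf_comp.symm
    _ = |a| * graphNorm f ε p := by
        simp only [graphCost_smul, graphNorm, Real.mul_iInf_of_nonneg (abs_nonneg a)]

theorem graphCost_add_le (hε : 0 ≤ ε) (p q : X × Y) (w₁ w₂ : X) :
    graphCost f ε (p + q) (w₁ + w₂) ≤ graphCost f ε p w₁ + graphCost f ε q w₂ := by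
  have h₁ : (p + q).1 - (w₁ + w₂) = (p.1 - w₁) + (q.1 - w₂) := by
    rw [Prod.fst_add]; abel
  have h₂ : (p + q).2 + f (w₁ + w₂) = (p.2 + f w₁) + (q.2 + f w₂) := by
    rw [Prod.snd_add, map_add]; abel
  have h₃ := mul_le_mul_of_nonneg_left (norm_add_le w₁ w₂) hε
  unfold graphCost
  rw [h₁, h₂]
  linarith [norm_add_le (p.1 - w₁) (q.1 - w₂), norm_add_le (p.2 + f w₁) (q.2 + f w₂)]

theorem graphNorm_add_le (hε : 0 ≤ ε) (p q : X × Y) :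
    graphNorm f ε (p + q) ≤ graphNorm f ε p + graphNorm f ε q :=
  le_ciInf_add_ciInf fun w₁ w₂ =>
    (graphNorm_le_graphCost f hε _ _).trans (graphCost_add_le f hε p q w₁ w₂)

theorem mul_norm_fst_le_graphNorm (hε : 0 ≤ ε) (p : X × Y) :
    ε * ‖p.1‖ ≤ max ε 1 * graphNorm f ε p := by
  rw [graphNorm, Real.mul_iInf_of_nonneg (hε.trans (le_max_left _ _))]
  refine le_ciInf fun w => ?_
  have h₁ := mul_le_mul_of_nonneg_right (le_max_left ε 1) (norm_nonneg (p.1 - w))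
  have h₂ := mul_le_mul_of_nonneg_right (le_max_right ε 1) (mul_nonneg hε (norm_nonneg w))
  unfold graphCost
  linarith [mul_le_mul_of_nonneg_left (norm_le_norm_sub_add p.1 w) hε,
    mul_nonneg (hε.trans (le_max_left ε 1)) (norm_nonneg (p.2 + f w))]

theorem mul_norm_snd_le_graphNorm (hε : 0 ≤ ε) (p : X × Y) :
    ε * ‖p.2‖ ≤ max ε ‖f‖ * graphNorm f ε p := by
  rw [graphNorm, Real.mul_iInf_of_nonneg (hε.trans (le_max_left _ _))]
  refine le_ciInf fun w => ?_
  have hy : ‖p.2‖ ≤ ‖p.2 + f w‖ + ‖f‖ * ‖w‖ := by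
    calc ‖p.2‖ ≤ ‖p.2 + f w‖ + ‖f w‖ := by simpa using norm_sub_le (p.2 + f w) (f w)
      _ ≤ ‖p.2 + f w‖ + ‖f‖ * ‖w‖ := by gcongr; exact f.le_opNorm w
  have h₁ := mul_le_mul_of_nonneg_right (le_max_left ε ‖f‖) (norm_nonneg (p.2 + f w))
  have h₂ := mul_le_mul_of_nonneg_right (le_max_right ε ‖f‖) (mul_nonneg hε (norm_nonneg w))
  unfold graphCost
  linarith [mul_le_mul_of_nonneg_left hy hε,
    mul_nonneg (hε.trans (le_max_left ε ‖f‖)) (norm_nonneg (p.1 - w))]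

end Seminormed

theorem graphNorm_eq_zero {X Y : Type*} [NormedAddCommGroup X] [NormedSpace ℝ X]
    [NormedAddCommGroup Y] [NormedSpace ℝ Y] (f : X →L[ℝ] Y) {ε : ℝ} (hε : 0 < ε)
    (p : X × Y) : graphNorm f ε p = 0 ↔ p = 0 := by
  refine ⟨fun h => ?_, fun h => h ▸ graphNorm_zero f hε.le⟩
  have h₁ := mul_norm_fst_le_graphNorm f hε.le p
  have h₂ := mul_norm_snd_le_graphNorm f hε.le p
  rw [h, mul_zero] at h₁ h₂
  exact Prod.ext (norm_le_zero_iff.1 (nonpos_of_mul_nonpos_right h₁ hε))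
    (norm_le_zero_iff.1 (nonpos_of_mul_nonpos_right h₂ hε))

theorem stmt_0_general {X Y : Type*} [NormedAddCommGroup X] [NormedSpace ℝ X]
    [NormedAddCommGroup Y] [NormedSpace ℝ Y]
    (ε : ℝ) (hε0 : 0 < ε)
    (f : X →L[ℝ] Y) :
    ∀ N : X × Y → ℝ,
      (N = fun p => sInf {r : ℝ | ∃ w : X, r = ‖p.1 - w‖ + ‖p.2 + f w‖ + ε * ‖w‖}) →
      (∀ p, 0 ≤ N p) ∧
      (∀ p, N p = 0 ↔ p = 0) ∧
      (∀ (a : ℝ) (p : X × Y), N (a • p) = |a| * N p) ∧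
      (∀ p q : X × Y, N (p + q) ≤ N p + N q) := by
  intro N hN
  obtain rfl : N = graphNorm f ε := by
    rw [hN]
    funext p
    exact congrArg sInf (Set.ext fun r => exists_congr fun w => eq_comm)
  exact ⟨graphNorm_nonneg f hε0.le, graphNorm_eq_zero f hε0, graphNorm_smul f hε0.le,
    graphNorm_add_le f hε0.le⟩

/-- the infimum formula ‖(x,y)‖_f defines a norm on X × Y. -/
theorem stmt_0 {X Y : Type*} [NormedAddCommGroup X] [NormedSpace ℝ X]
    [NormedAddCommGroup Y] [NormedSpace ℝ Y]
    (ε : ℝ) (hε0 : 0 < ε) (hε1 : ε < 1)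
    (f : X →L[ℝ] Y) (hf1 : ∀ x, ‖f x‖ ≤ ‖x‖)
    (hf2 : ∀ x, (1 - ε) * ‖x‖ ≤ ‖f x‖) :
    ∀ N : X × Y → ℝ,
      (N = fun p => sInf {r : ℝ | ∃ w : X, r = ‖p.1 - w‖ + ‖p.2 + f w‖ + ε * ‖w‖}) →
      (∀ p, 0 ≤ N p) ∧
      (∀ p, N p = 0 ↔ p = 0) ∧
      (∀ (a : ℝ) (p : X × Y), N (a • p) = |a| * N p) ∧
      (∀ p q : X × Y, N (p + q) ≤ N p + N q) :=
  stmt_0_general ε hε0 f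
end

section
/- With the norm ‖(x,y)‖_f = inf { ‖x−w‖ + ‖y + f w‖ + ε‖w‖ : w ∈ X } on X × Y, the canonical embedding i : X → X × Y, i(x) = (x, 0), is isometric: ‖(x,0)‖_f = ‖x‖ for all x ∈ X. -/
lemma norm_le_norm_sub_add_norm_apply_add {X Y : Type*} [SeminormedAddCommGroup X]
    [SeminormedAddCommGroup Y] {ε : ℝ} {f : X → Y} (hf : ∀ x, (1 - ε) * ‖x‖ ≤ ‖f x‖)
    (x w : X) : ‖x‖ ≤ ‖x - w‖ + ‖f w‖ + ε * ‖w‖ := by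
  calc ‖x‖ ≤ ‖x - w‖ + ‖w‖ := norm_le_norm_sub_add x w
    _ = ‖x - w‖ + (1 - ε) * ‖w‖ + ε * ‖w‖ := by ring
    _ ≤ ‖x - w‖ + ‖f w‖ + ε * ‖w‖ := by gcongr; exact hf w

theorem stmt_1_general {X Y : Type*} [NormedAddCommGroup X] [NormedSpace ℝ X]
    [NormedAddCommGroup Y] [NormedSpace ℝ Y]
    (ε : ℝ)
    (f : X →ₗ[ℝ] Y)
    (hf2 : ∀ x, (1 - ε) * ‖x‖ ≤ ‖f x‖)
    (N : X × Y → ℝ)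
    (hN : N = fun p => sInf {r : ℝ | ∃ w : X, r = ‖p.1 - w‖ + ‖p.2 + f w‖ + ε * ‖w‖}) :
    ∀ x : X, N (x, 0) = ‖x‖ := by
  intro x
  subst hN
  refine IsLeast.csInf_eq ⟨⟨0, by simp⟩, ?_⟩
  rintro r ⟨w, rfl⟩
  simpa only [zero_add] using norm_le_norm_sub_add_norm_apply_add hf2 x w

/-- the canonical embedding i : X → X × Y, x ↦ (x,0), is isometric
for the norm ‖·‖_f. -/
theorem stmt_1 {X Y : Type*} [NormedAddCommGroup X] [NormedSpace ℝ X]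
    [NormedAddCommGroup Y] [NormedSpace ℝ Y]
    (ε : ℝ) (hε0 : 0 < ε) (hε1 : ε < 1)
    (f : X →ₗ[ℝ] Y) (hf1 : ∀ x, ‖f x‖ ≤ ‖x‖)
    (hf2 : ∀ x, (1 - ε) * ‖x‖ ≤ ‖f x‖)
    (N : X × Y → ℝ)
    (hN : N = fun p => sInf {r : ℝ | ∃ w : X, r = ‖p.1 - w‖ + ‖p.2 + f w‖ + ε * ‖w‖}) :
    ∀ x : X, N (x, 0) = ‖x‖ :=
  stmt_1_general ε f hf2 N hN
end

section
/- With the norm ‖(x,y)‖_f = inf { ‖x−w‖ + ‖y + f w‖ + ε‖w‖ : w ∈ X } on X × Y, the canonical embedding j : Y → X × Y, j(y) = (0, y), is isometric: ‖(0,y)‖_f = ‖y‖ for all y ∈ Y. -/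
/-! Every `w` in the infimum defining `‖(0, y)‖_f` gives a value at least `‖y‖`, since
`‖y‖ ≤ ‖y + f w‖ + ‖f w‖ ≤ ‖y + f w‖ + ‖w‖`, and `w = 0` attains `‖y‖`. -/

section

variable {X Y : Type*} [SeminormedAddCommGroup X] [SeminormedAddCommGroup Y]

theorem norm_le_norm_zero_sub_add_norm_add_map {f : X → Y} (hf : ∀ x, ‖f x‖ ≤ ‖x‖)
    {ε : ℝ} (hε : 0 ≤ ε) (y : Y) (w : X) :
    ‖y‖ ≤ ‖(0 : X) - w‖ + ‖y + f w‖ + ε * ‖w‖ :=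
  calc ‖y‖ = ‖(y + f w) - f w‖ := by rw [add_sub_cancel_right]
    _ ≤ ‖y + f w‖ + ‖f w‖ := norm_sub_le _ _
    _ ≤ ‖(0 : X) - w‖ + ‖y + f w‖ + ε * ‖w‖ := by
      rw [zero_sub, norm_neg]
      nlinarith [hf w, norm_nonneg w]

theorem isLeast_norm_zero_sub_add_norm_add_map {F : Type*} [FunLike F X Y]
    [AddMonoidHomClass F X Y] {f : F} (hf : ∀ x, ‖f x‖ ≤ ‖x‖) {ε : ℝ} (hε : 0 ≤ ε) (y : Y) :
    IsLeast {r : ℝ | ∃ w : X, r = ‖(0 : X) - w‖ + ‖y + f w‖ + ε * ‖w‖} ‖y‖ :=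
  ⟨⟨0, by simp⟩, by
    rintro r ⟨w, rfl⟩
    exact norm_le_norm_zero_sub_add_norm_add_map hf hε y w⟩

end

theorem stmt_2_general {X Y : Type*} [NormedAddCommGroup X] [NormedSpace ℝ X]
    [NormedAddCommGroup Y] [NormedSpace ℝ Y]
    (ε : ℝ) (hε0 : 0 < ε)
    (f : X →ₗ[ℝ] Y) (hf1 : ∀ x, ‖f x‖ ≤ ‖x‖)
    (N : X × Y → ℝ)
    (hN : N = fun p => sInf {r : ℝ | ∃ w : X, r = ‖p.1 - w‖ + ‖p.2 + f w‖ + ε * ‖w‖}) :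
    ∀ y : Y, N (0, y) = ‖y‖ := by
  intro y
  subst hN
  exact (isLeast_norm_zero_sub_add_norm_add_map hf1 hε0.le y).csInf_eq

/-- the canonical embedding j : Y → X × Y, y ↦ (0,y), is isometric
for the norm ‖·‖_f. -/
theorem stmt_2 {X Y : Type*} [NormedAddCommGroup X] [NormedSpace ℝ X]
    [NormedAddCommGroup Y] [NormedSpace ℝ Y]
    (ε : ℝ) (hε0 : 0 < ε) (hε1 : ε < 1)
    (f : X →ₗ[ℝ] Y) (hf1 : ∀ x, ‖f x‖ ≤ ‖x‖)
    (hf2 : ∀ x, (1 - ε) * ‖x‖ ≤ ‖f x‖)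
    (N : X × Y → ℝ)
    (hN : N = fun p => sInf {r : ℝ | ∃ w : X, r = ‖p.1 - w‖ + ‖p.2 + f w‖ + ε * ‖w‖}) :
    ∀ y : Y, N (0, y) = ‖y‖ :=
  stmt_2_general ε hε0 f hf1 N hN
end

section
/- Let X × Y carry the norm ‖·‖_f. Given a normed space V and linear maps k : X → V, ℓ : Y → V with ‖k‖ ≤ 1, ‖ℓ‖ ≤ 1, and ‖ℓ∘f − k‖ ≤ ε, the unique linear map h : X × Y → V with h(x,y) = k x + ℓ y satisfies ‖h(x,y)‖ ≤ ‖(x,y)‖_f for all (x,y); i.e., ‖h‖ ≤ 1 with respect to ‖·‖_f. -/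
/- Every term of the infimum defining ‖(x, y)‖_f bounds ‖k x + ℓ y‖, since
k x + ℓ y = k (x - w) + ℓ (y + f w) + (k w - ℓ (f w)) for every w. -/

theorem norm_map_add_map_le {𝕜 X Y V : Type*} [Ring 𝕜]
    [SeminormedAddCommGroup X] [Module 𝕜 X] [SeminormedAddCommGroup Y] [Module 𝕜 Y]
    [SeminormedAddCommGroup V] [Module 𝕜 V]
    {ε : ℝ} {f : X →ₗ[𝕜] Y} {k : X →ₗ[𝕜] V} {ℓ : Y →ₗ[𝕜] V}
    (hk : ∀ x, ‖k x‖ ≤ ‖x‖) (hℓ : ∀ y, ‖ℓ y‖ ≤ ‖y‖)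
    (hkℓ : ∀ x, ‖ℓ (f x) - k x‖ ≤ ε * ‖x‖) (x : X) (y : Y) (w : X) :
    ‖k x + ℓ y‖ ≤ ‖x - w‖ + ‖y + f w‖ + ε * ‖w‖ := by
  have hsplit : k x + ℓ y = k (x - w) + ℓ (y + f w) + (k w - ℓ (f w)) := by
    simp only [map_sub, map_add]
    abel
  calc ‖k x + ℓ y‖
      ≤ ‖k (x - w)‖ + ‖ℓ (y + f w)‖ + ‖k w - ℓ (f w)‖ := hsplit ▸ norm_add₃_le
    _ ≤ ‖x - w‖ + ‖y + f w‖ + ε * ‖w‖ := by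
        gcongr
        · exact hk _
        · exact hℓ _
        · exact norm_sub_rev (k w) _ ▸ hkℓ w

theorem stmt_4_general {X Y V : Type*} [NormedAddCommGroup X] [NormedSpace ℝ X]
    [NormedAddCommGroup Y] [NormedSpace ℝ Y]
    [NormedAddCommGroup V] [NormedSpace ℝ V]
    (ε : ℝ)
    (f : X →ₗ[ℝ] Y)
    (N : X × Y → ℝ)
    (hN : N = fun p => sInf {r : ℝ | ∃ w : X, r = ‖p.1 - w‖ + ‖p.2 + f w‖ + ε * ‖w‖})
    (k : X →ₗ[ℝ] V) (ℓ : Y →ₗ[ℝ] V)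
    (hk : ∀ x, ‖k x‖ ≤ ‖x‖) (hℓ : ∀ y, ‖ℓ y‖ ≤ ‖y‖)
    (hkℓ : ∀ x, ‖ℓ (f x) - k x‖ ≤ ε * ‖x‖) :
    ∀ (x : X) (y : Y), ‖k x + ℓ y‖ ≤ N (x, y) := by
  intro x y
  subst hN
  refine le_csInf ⟨_, 0, rfl⟩ ?_
  rintro r ⟨w, rfl⟩
  exact norm_map_add_map_le hk hℓ hkℓ x y w

/-- the unique linear map h(x,y) = k x + ℓ y is 1-bounded with
respect to ‖·‖_f whenever ‖k‖ ≤ 1, ‖ℓ‖ ≤ 1 and ‖ℓ∘f − k‖ ≤ ε. -/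
theorem stmt_4 {X Y V : Type*} [NormedAddCommGroup X] [NormedSpace ℝ X]
    [NormedAddCommGroup Y] [NormedSpace ℝ Y]
    [NormedAddCommGroup V] [NormedSpace ℝ V]
    (ε : ℝ) (hε0 : 0 < ε) (hε1 : ε < 1)
    (f : X →ₗ[ℝ] Y) (hf1 : ∀ x, ‖f x‖ ≤ ‖x‖)
    (hf2 : ∀ x, (1 - ε) * ‖x‖ ≤ ‖f x‖)
    (N : X × Y → ℝ)
    (hN : N = fun p => sInf {r : ℝ | ∃ w : X, r = ‖p.1 - w‖ + ‖p.2 + f w‖ + ε * ‖w‖})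
    (k : X →ₗ[ℝ] V) (ℓ : Y →ₗ[ℝ] V)
    (hk : ∀ x, ‖k x‖ ≤ ‖x‖) (hℓ : ∀ y, ‖ℓ y‖ ≤ ‖y‖)
    (hkℓ : ∀ x, ‖ℓ (f x) - k x‖ ≤ ε * ‖x‖) :
    ∀ (x : X) (y : Y), ‖k x + ℓ y‖ ≤ N (x, y) :=
  stmt_4_general ε f N hN k ℓ hk hℓ hkℓ
end

section
/- The closed unit ball of the norm ‖(x,y)‖_f = inf { ‖x−w‖ + ‖y + f w‖ + ε‖w‖ : w ∈ X } on X × Y equals the closed convex hull of (B_X × {0}) ∪ ({0} × B_Y) ∪ G, where G = { (w, −f w) : ‖w‖ ≤ ε⁻¹ }. -/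
/-!
Writing `p = (p.1 - w, 0) + (0, p.2 + f w) + (w, -f w)`, the quantity `‖p‖_f` is the least cost
`‖p.1 - w‖ + ‖p.2 + f w‖ + ε‖w‖` of such a decomposition, and it is a seminorm. A decomposition of
cost `a + b + c < 1` places `p` in `a • (B_X × 0) + b • (0 × B_Y) + c • G ⊆ (a + b + c) • K ⊆ K`,
where `K` is the convex hull, which contains `0`. So the open unit ball lies in `K`, and the closed
ball, whose points are the limits of `t • p` as `t → 1⁻`, lies in its closure. Conversely every
generator has norm at most `1`, and the closed unit ball of a continuous seminorm is closed and
convex.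
-/

open Metric Set Filter Topology Pointwise

theorem Convex.add_add_mem_of_mem_smul {E : Type*} [AddCommGroup E] [Module ℝ E] {C : Set E}
    (hC : Convex ℝ C) (h0 : (0 : E) ∈ C) {a b c : ℝ} (ha : 0 ≤ a) (hb : 0 ≤ b) (hc : 0 ≤ c)
    (habc : a + b + c ≤ 1) {x y z : E} (hx : x ∈ a • C) (hy : y ∈ b • C) (hz : z ∈ c • C) :
    x + y + z ∈ C := by
  have hmem : x + y + z ∈ (a + b + c) • C := by
    rw [hC.add_smul (add_nonneg ha hb) hc, hC.add_smul ha hb]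
    exact add_mem_add (add_mem_add hx hy) hz
  obtain ⟨u, hu, hux⟩ := hmem
  rw [← hux]
  exact hC.smul_mem_of_zero_mem h0 hu ⟨by positivity, habc⟩

theorem LinearMap.apply_mem_smul_image_closedBall {E F : Type*} [NormedAddCommGroup E]
    [NormedSpace ℝ E] [AddCommGroup F] [Module ℝ F] (L : E →ₗ[ℝ] F) {r : ℝ} (hr : 0 < r) (x : E) :
    L x ∈ (‖x‖ / r) • (L '' closedBall 0 r) := by
  rw [← image_smul_set, smul_closedBall _ _ hr.le, smul_zero]
  exact mem_image_of_mem _ (by simp [abs_of_pos hr, hr.ne'])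

theorem Seminorm.closedBall_subset_closure_of_ball_subset {E : Type*} [AddCommGroup E]
    [Module ℝ E] [TopologicalSpace E] [ContinuousSMul ℝ E] (p : Seminorm ℝ E) {r : ℝ}
    (hr : 0 < r) {C : Set E} (hC : p.ball 0 r ⊆ C) : p.closedBall 0 r ⊆ closure C := by
  intro x hx
  rw [mem_closedBall_zero] at hx
  have hlim : Tendsto (fun t : ℝ => t • x) (𝓝[<] 1) (𝓝 x) := by
    simpa using ((tendsto_id (x := 𝓝 (1 : ℝ))).smul_const x).mono_left nhdsWithin_le_nhds
  refine mem_closure_of_tendsto hlim ?_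
  filter_upwards [Ioo_mem_nhdsLT zero_lt_one] with t ht
  apply hC
  rw [mem_ball_zero, map_smul_eq_mul, Real.norm_of_nonneg ht.1.le]
  calc t * p x ≤ t * r := mul_le_mul_of_nonneg_left hx ht.1.le
    _ < r := mul_lt_of_lt_one_left hr ht.2

section Decomposition

variable {X Y : Type*} [NormedAddCommGroup X] [NormedSpace ℝ X] [NormedAddCommGroup Y]
  [NormedSpace ℝ Y] (ε : ℝ) (f : X →ₗ[ℝ] Y)

def decompCost (p : X × Y) (w : X) : ℝ :=
  ‖p.1 - w‖ + ‖p.2 + f w‖ + ε * ‖w‖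

variable {ε f}

theorem decompCost_nonneg (hε : 0 ≤ ε) (p : X × Y) (w : X) : 0 ≤ decompCost ε f p w := by
  unfold decompCost
  positivity

theorem decompCost_add_le (hε : 0 ≤ ε) (p q : X × Y) (v w : X) :
    decompCost ε f (p + q) (v + w) ≤ decompCost ε f p v + decompCost ε f q w := by
  have h₁ : ‖(p + q).1 - (v + w)‖ ≤ ‖p.1 - v‖ + ‖q.1 - w‖ := by
    rw [Prod.fst_add, add_sub_add_comm]
    exact norm_add_le _ _
  have h₂ : ‖(p + q).2 + f (v + w)‖ ≤ ‖p.2 + f v‖ + ‖q.2 + f w‖ := by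
    rw [Prod.snd_add, map_add, add_add_add_comm]
    exact norm_add_le _ _
  have h₃ : ε * ‖v + w‖ ≤ ε * ‖v‖ + ε * ‖w‖ := by
    rw [← mul_add]
    exact mul_le_mul_of_nonneg_left (norm_add_le _ _) hε
  unfold decompCost
  linarith

theorem decompCost_smul (a : ℝ) (p : X × Y) (w : X) :
    decompCost ε f (a • p) (a • w) = ‖a‖ * decompCost ε f p w := by
  simp only [decompCost, Prod.smul_fst, Prod.smul_snd, map_smul, ← smul_sub, ← smul_add,
    norm_smul]
  ring

theorem bddBelow_range_decompCost (hε : 0 ≤ ε) (p : X × Y) :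
    BddBelow (range (decompCost ε f p)) :=
  ⟨0, by rintro _ ⟨w, rfl⟩; exact decompCost_nonneg hε p w⟩

variable (ε f) in
noncomputable def decompSeminorm (hε : 0 ≤ ε) : Seminorm ℝ (X × Y) :=
  Seminorm.ofSMulLE (fun p => ⨅ w, decompCost ε f p w)
    (le_antisymm (ciInf_le_of_le (bddBelow_range_decompCost hε 0) 0 (by simp [decompCost]))
      (le_ciInf (decompCost_nonneg hε 0)))
    (fun p q => le_ciInf_add_ciInf fun v w =>
      ciInf_le_of_le (bddBelow_range_decompCost hε _) (v + w) (decompCost_add_le hε p q v w))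
    (fun a p => by
      rw [Real.mul_iInf_of_nonneg (norm_nonneg a)]
      exact le_ciInf fun w =>
        ciInf_le_of_le (bddBelow_range_decompCost hε _) (a • w) (decompCost_smul a p w).le)

section

variable (hε : 0 ≤ ε)

theorem decompSeminorm_apply (p : X × Y) :
    decompSeminorm ε f hε p = ⨅ w, decompCost ε f p w :=
  rfl

theorem decompSeminorm_le_decompCost (p : X × Y) (w : X) :
    decompSeminorm ε f hε p ≤ decompCost ε f p w :=
  ciInf_le (bddBelow_range_decompCost hε p) w

theorem exists_decompCost_lt {p : X × Y} {r : ℝ} (h : decompSeminorm ε f hε p < r) :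
    ∃ w, decompCost ε f p w < r :=
  exists_lt_of_ciInf_lt h

theorem decompSeminorm_le_norm_add_norm (p : X × Y) :
    decompSeminorm ε f hε p ≤ ‖p.1‖ + ‖p.2‖ := by
  simpa [decompCost] using decompSeminorm_le_decompCost hε p 0

theorem continuous_decompSeminorm : Continuous (decompSeminorm ε f hε) := by
  refine Seminorm.continuous_of_le (q := (normSeminorm ℝ X).comp (LinearMap.fst ℝ X Y) +
    (normSeminorm ℝ Y).comp (LinearMap.snd ℝ X Y)) ?_ (decompSeminorm_le_norm_add_norm hε)
  simp only [FunLike.coe_add, Seminorm.coe_comp, coe_normSeminorm, LinearMap.coe_fst,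
    LinearMap.coe_snd]
  fun_prop

end

variable (ε f) in
def decompGenerators : Set (X × Y) :=
  LinearMap.inl ℝ X Y '' closedBall 0 1 ∪ LinearMap.inr ℝ X Y '' closedBall 0 1 ∪
    LinearMap.id.prod (-f) '' closedBall 0 ε⁻¹

theorem decompGenerators_subset_closedBall (hε : 0 < ε) :
    decompGenerators ε f ⊆ (decompSeminorm ε f hε.le).closedBall 0 1 := by
  rintro _ ((⟨x, hx, rfl⟩ | ⟨y, hy, rfl⟩) | ⟨w, hw, rfl⟩) <;>
    rw [Seminorm.mem_closedBall_zero] <;> rw [mem_closedBall_zero_iff] at *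
  · exact (decompSeminorm_le_norm_add_norm hε.le _).trans (by simpa using hx)
  · exact (decompSeminorm_le_norm_add_norm hε.le _).trans (by simpa using hy)
  · calc decompSeminorm ε f hε.le (LinearMap.id.prod (-f) w)
        ≤ decompCost ε f (LinearMap.id.prod (-f) w) w := decompSeminorm_le_decompCost _ _ _
      _ = ε * ‖w‖ := by simp [decompCost]
      _ ≤ ε * ε⁻¹ := by gcongr
      _ = 1 := mul_inv_cancel₀ hε.ne'

theorem ball_decompSeminorm_subset_convexHull (hε : 0 < ε) :
    (decompSeminorm ε f hε.le).ball 0 1 ⊆ convexHull ℝ (decompGenerators ε f) := by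
  intro p hp
  rw [Seminorm.mem_ball_zero] at hp
  obtain ⟨w, hw⟩ := exists_decompCost_lt hε.le hp
  have hsplit : p = LinearMap.inl ℝ X Y (p.1 - w) + LinearMap.inr ℝ X Y (p.2 + f w) +
      LinearMap.id.prod (-f) w := by
    ext <;> simp
  have hmono {A : Set (X × Y)} (hA : A ⊆ decompGenerators ε f) (c : ℝ) :
      c • A ⊆ c • convexHull ℝ (decompGenerators ε f) :=
    smul_set_mono (hA.trans (subset_convexHull ℝ _))
  have h₁ := (LinearMap.inl ℝ X Y).apply_mem_smul_image_closedBall one_pos (p.1 - w)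
  have h₂ := (LinearMap.inr ℝ X Y).apply_mem_smul_image_closedBall one_pos (p.2 + f w)
  have h₃ := (LinearMap.id.prod (-f)).apply_mem_smul_image_closedBall (inv_pos.2 hε) w
  rw [div_one] at h₁ h₂
  rw [div_inv_eq_mul, mul_comm] at h₃
  have h₀ : (0 : X × Y) ∈ decompGenerators ε f :=
    Or.inl (Or.inl ⟨0, mem_closedBall_self zero_le_one, map_zero _⟩)
  rw [hsplit]
  exact (convex_convexHull ℝ _).add_add_mem_of_mem_smul (subset_convexHull ℝ _ h₀)
    (norm_nonneg _) (norm_nonneg _) (by positivity) hw.le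
    (hmono (fun _ h => Or.inl (Or.inl h)) _ h₁) (hmono (fun _ h => Or.inl (Or.inr h)) _ h₂)
    (hmono (fun _ h => Or.inr h) _ h₃)

theorem closedBall_decompSeminorm_eq_closure_convexHull (hε : 0 < ε) :
    (decompSeminorm ε f hε.le).closedBall 0 1 = closure (convexHull ℝ (decompGenerators ε f)) := by
  refine subset_antisymm (Seminorm.closedBall_subset_closure_of_ball_subset _ one_pos
    (ball_decompSeminorm_subset_convexHull hε)) (closure_minimal
      (convexHull_min (decompGenerators_subset_closedBall hε) (Seminorm.convex_closedBall _ _ _))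
      ?_)
  rw [Seminorm.closedBall_zero_eq]
  exact isClosed_le (continuous_decompSeminorm _) continuous_const

end Decomposition

theorem stmt_5_general {X Y : Type*} [NormedAddCommGroup X] [NormedSpace ℝ X]
    [NormedAddCommGroup Y] [NormedSpace ℝ Y]
    (ε : ℝ) (hε0 : 0 < ε)
    (f : X →ₗ[ℝ] Y)
    (N : X × Y → ℝ)
    (hN : N = fun p => sInf {r : ℝ | ∃ w : X, r = ‖p.1 - w‖ + ‖p.2 + f w‖ + ε * ‖w‖}) :
    {p : X × Y | N p ≤ 1} =
      closure (convexHull ℝ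
        (((fun x : X => ((x, (0 : Y)) : X × Y)) '' Metric.closedBall 0 1) ∪
         ((fun y : Y => (((0 : X), y) : X × Y)) '' Metric.closedBall 0 1) ∪
         {p : X × Y | ∃ w : X, ‖w‖ ≤ ε⁻¹ ∧ p = (w, -f w)})) := by
  have hN' : N = decompSeminorm ε f hε0.le := by
    ext p
    rw [hN, decompSeminorm_apply, iInf]
    exact congrArg sInf (ext fun r => exists_congr fun w => eq_comm)
  have hS : ((fun x : X => ((x, (0 : Y)) : X × Y)) '' Metric.closedBall 0 1) ∪
      ((fun y : Y => (((0 : X), y) : X × Y)) '' Metric.closedBall 0 1) ∪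
      {p : X × Y | ∃ w : X, ‖w‖ ≤ ε⁻¹ ∧ p = (w, -f w)} = decompGenerators ε f := by
    ext p
    simp [decompGenerators, eq_comm]
  rw [hN', ← Seminorm.closedBall_zero_eq, hS]
  exact closedBall_decompSeminorm_eq_closure_convexHull hε0

/-- the closed unit ball of ‖·‖_f equals the closed convex hull of
(B_X × {0}) ∪ ({0} × B_Y) ∪ G, where G = { (w, −f w) : ‖w‖ ≤ ε⁻¹ }. -/
theorem stmt_5 {X Y : Type*} [NormedAddCommGroup X] [NormedSpace ℝ X]
    [NormedAddCommGroup Y] [NormedSpace ℝ Y]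
    (ε : ℝ) (hε0 : 0 < ε) (hε1 : ε < 1)
    (f : X →ₗ[ℝ] Y) (hf1 : ∀ x, ‖f x‖ ≤ ‖x‖)
    (hf2 : ∀ x, (1 - ε) * ‖x‖ ≤ ‖f x‖)
    (N : X × Y → ℝ)
    (hN : N = fun p => sInf {r : ℝ | ∃ w : X, r = ‖p.1 - w‖ + ‖p.2 + f w‖ + ε * ‖w‖}) :
    {p : X × Y | N p ≤ 1} =
      closure (convexHull ℝ
        (((fun x : X => ((x, (0 : Y)) : X × Y)) '' Metric.closedBall 0 1) ∪
         ((fun y : Y => (((0 : X), y) : X × Y)) '' Metric.closedBall 0 1) ∪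
         {p : X × Y | ∃ w : X, ‖w‖ ≤ ε⁻¹ ∧ p = (w, -f w)})) :=
  stmt_5_general ε hε0 f N hN
end

section
/- If f : X → Y, T : Y → X are 1-bounded linear maps with ‖T∘f − id_X‖ ≤ ε (0 < ε < 1), then in the space X ⊕_f Y (i.e., X × Y with norm ‖·‖_f) there exist 1-bounded linear operators P : X ⊕_f Y → X and Q : X ⊕_f Y → Y such that P∘i = id_X, Q∘j = id_Y, P∘j = T, and Q∘i = f, where i(x) = (x,0), j(y) = (0,y). -/
/-!
Take `P (x, y) = x + T y` and `Q (x, y) = f x + y`. For every `w : X`,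
`x + T y = (x - w) + T (y + f w) + (w - T (f w))` and `f x + y = f (x - w) + (y + f w)`,
so the triangle inequality bounds `‖P (x, y)‖` and `‖Q (x, y)‖` by the term
`‖x - w‖ + ‖y + f w‖ + ε ‖w‖` of the infimum defining `‖(x, y)‖_f`.
-/

lemma Real.le_sInf_setOf_exists_eq {ι : Type*} [Nonempty ι] {a : ℝ} {g : ι → ℝ}
    (h : ∀ i, a ≤ g i) : a ≤ sInf {r : ℝ | ∃ i, r = g i} :=
  le_csInf ⟨g (Classical.arbitrary ι), _, rfl⟩ (by rintro _ ⟨i, rfl⟩; exact h i)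

section

variable {X Y : Type*} [NormedAddCommGroup X] [NormedSpace ℝ X]
  [NormedAddCommGroup Y] [NormedSpace ℝ Y] {ε : ℝ} {f : X →ₗ[ℝ] Y} {T : Y →ₗ[ℝ] X}

lemma norm_add_apply_le_of_almost_leftInverse (hT : ∀ y, ‖T y‖ ≤ ‖y‖)
    (hTf : ∀ x, ‖T (f x) - x‖ ≤ ε * ‖x‖) (x w : X) (y : Y) :
    ‖x + T y‖ ≤ ‖x - w‖ + ‖y + f w‖ + ε * ‖w‖ := by
  have hsplit : x + T y = (x - w) + T (y + f w) + (w - T (f w)) := by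
    rw [map_add]; abel
  calc ‖x + T y‖ ≤ ‖x - w‖ + ‖T (y + f w)‖ + ‖w - T (f w)‖ := hsplit ▸ norm_add₃_le
    _ ≤ ‖x - w‖ + ‖y + f w‖ + ε * ‖w‖ := by
      gcongr
      · exact hT _
      · rw [norm_sub_rev]; exact hTf w

lemma norm_apply_add_le_of_norm_le (hε : 0 ≤ ε) (hf : ∀ x, ‖f x‖ ≤ ‖x‖) (x w : X) (y : Y) :
    ‖f x + y‖ ≤ ‖x - w‖ + ‖y + f w‖ + ε * ‖w‖ := by
  have hsplit : f x + y = f (x - w) + (y + f w) := by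
    rw [map_sub]; abel
  calc ‖f x + y‖ ≤ ‖f (x - w)‖ + ‖y + f w‖ := hsplit ▸ norm_add_le _ _
    _ ≤ ‖x - w‖ + ‖y + f w‖ := by gcongr; exact hf _
    _ ≤ ‖x - w‖ + ‖y + f w‖ + ε * ‖w‖ := le_add_of_nonneg_right (by positivity)

end

theorem stmt_7_general {X Y : Type*} [NormedAddCommGroup X] [NormedSpace ℝ X]
    [NormedAddCommGroup Y] [NormedSpace ℝ Y]
    (ε : ℝ) (hε0 : 0 < ε)
    (f : X →ₗ[ℝ] Y) (T : Y →ₗ[ℝ] X)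
    (hf : ∀ x, ‖f x‖ ≤ ‖x‖) (hT : ∀ y, ‖T y‖ ≤ ‖y‖)
    (hTf : ∀ x, ‖T (f x) - x‖ ≤ ε * ‖x‖)
    (N : X × Y → ℝ)
    (hN : N = fun p => sInf {r : ℝ | ∃ w : X, r = ‖p.1 - w‖ + ‖p.2 + f w‖ + ε * ‖w‖}) :
    ∃ (P : X × Y →ₗ[ℝ] X) (Q : X × Y →ₗ[ℝ] Y),
      (∀ p : X × Y, ‖P p‖ ≤ N p) ∧ (∀ p : X × Y, ‖Q p‖ ≤ N p) ∧
      (∀ x : X, P (x, 0) = x) ∧ (∀ y : Y, Q (0, y) = y) ∧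
      (∀ y : Y, P (0, y) = T y) ∧ (∀ x : X, Q (x, 0) = f x) := by
  subst hN
  refine ⟨LinearMap.fst ℝ X Y + T ∘ₗ LinearMap.snd ℝ X Y,
    f ∘ₗ LinearMap.fst ℝ X Y + LinearMap.snd ℝ X Y,
    fun p ↦ Real.le_sInf_setOf_exists_eq fun w ↦
      norm_add_apply_le_of_almost_leftInverse hT hTf p.1 w p.2,
    fun p ↦ Real.le_sInf_setOf_exists_eq fun w ↦
      norm_apply_add_le_of_norm_le hε0.le hf p.1 w p.2,
    ?_, ?_, ?_, ?_⟩ <;> intro <;> simp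

/-- existence of 1-bounded operators P, Q on X ⊕_f Y with
P∘i = id, Q∘j = id, P∘j = T and Q∘i = f. -/
theorem stmt_7 {X Y : Type*} [NormedAddCommGroup X] [NormedSpace ℝ X]
    [NormedAddCommGroup Y] [NormedSpace ℝ Y]
    (ε : ℝ) (hε0 : 0 < ε) (hε1 : ε < 1)
    (f : X →ₗ[ℝ] Y) (T : Y →ₗ[ℝ] X)
    (hf : ∀ x, ‖f x‖ ≤ ‖x‖) (hT : ∀ y, ‖T y‖ ≤ ‖y‖)
    (hTf : ∀ x, ‖T (f x) - x‖ ≤ ε * ‖x‖)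
    (N : X × Y → ℝ)
    (hN : N = fun p => sInf {r : ℝ | ∃ w : X, r = ‖p.1 - w‖ + ‖p.2 + f w‖ + ε * ‖w‖}) :
    ∃ (P : X × Y →ₗ[ℝ] X) (Q : X × Y →ₗ[ℝ] Y),
      (∀ p : X × Y, ‖P p‖ ≤ N p) ∧ (∀ p : X × Y, ‖Q p‖ ≤ N p) ∧
      (∀ x : X, P (x, 0) = x) ∧ (∀ y : Y, Q (0, y) = y) ∧
      (∀ y : Y, P (0, y) = T y) ∧ (∀ x : X, Q (x, 0) = f x) :=
  stmt_7_general ε hε0 f T hf hT hTf N hN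
end

section
/- In the setting of the previous lemma, P : X ⊕_f Y → X defined by P(x,y) = x + T y satisfies ‖P(x,y)‖ ≤ ‖(x,y)‖_f for all (x,y), and P(x,0) = x, P(0,y) = T y. -/
/-! For every `w`, `x + T y = (x - w) + T (y + f w) - (T (f w) - w)`; the three pieces are bounded
by the three terms of the infimum defining `‖(x, y)‖_f`, so `‖x + T y‖` is a lower bound of it. -/

theorem norm_add_apply_le_of_approx_left_inverse {X Y : Type*}
    [SeminormedAddCommGroup X] [SeminormedAddCommGroup Y] {ε : ℝ} {f : X →+ Y} {T : Y →+ X}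
    (hT : ∀ y, ‖T y‖ ≤ ‖y‖) (hTf : ∀ x, ‖T (f x) - x‖ ≤ ε * ‖x‖) (x w : X) (y : Y) :
    ‖x + T y‖ ≤ ‖x - w‖ + ‖y + f w‖ + ε * ‖w‖ := by
  have hsplit : x + T y = (x - w) + T (y + f w) - (T (f w) - w) := by
    rw [map_add]; abel
  calc ‖x + T y‖ ≤ ‖x - w‖ + ‖T (y + f w)‖ + ‖T (f w) - w‖ := by
        rw [hsplit]; exact (norm_sub_le _ _).trans (by gcongr; exact norm_add_le _ _)
    _ ≤ ‖x - w‖ + ‖y + f w‖ + ε * ‖w‖ := by gcongr; exacts [hT _, hTf w]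

theorem stmt_8_general {X Y : Type*} [NormedAddCommGroup X] [NormedSpace ℝ X]
    [NormedAddCommGroup Y] [NormedSpace ℝ Y]
    (ε : ℝ)
    (f : X →ₗ[ℝ] Y) (T : Y →ₗ[ℝ] X)
    (hT : ∀ y, ‖T y‖ ≤ ‖y‖)
    (hTf : ∀ x, ‖T (f x) - x‖ ≤ ε * ‖x‖)
    (N : X × Y → ℝ)
    (hN : N = fun p => sInf {r : ℝ | ∃ w : X, r = ‖p.1 - w‖ + ‖p.2 + f w‖ + ε * ‖w‖}) :
    (∀ (x : X) (y : Y), ‖x + T y‖ ≤ N (x, y)) ∧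
    (∀ x : X, x + T 0 = x) ∧ (∀ y : Y, (0 : X) + T y = T y) := by
  refine ⟨fun x y => ?_, fun x => by simp, fun y => by simp⟩
  rw [hN]
  refine le_csInf ⟨_, 0, rfl⟩ ?_
  rintro r ⟨w, rfl⟩
  exact norm_add_apply_le_of_approx_left_inverse (f := f.toAddMonoidHom)
    (T := T.toAddMonoidHom) hT hTf x w y

/-- P(x,y) = x + T y is 1-bounded on X ⊕_f Y and satisfies
P(x,0) = x, P(0,y) = T y. -/
theorem stmt_8 {X Y : Type*} [NormedAddCommGroup X] [NormedSpace ℝ X]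
    [NormedAddCommGroup Y] [NormedSpace ℝ Y]
    (ε : ℝ) (hε0 : 0 < ε) (hε1 : ε < 1)
    (f : X →ₗ[ℝ] Y) (T : Y →ₗ[ℝ] X)
    (hf : ∀ x, ‖f x‖ ≤ ‖x‖) (hT : ∀ y, ‖T y‖ ≤ ‖y‖)
    (hTf : ∀ x, ‖T (f x) - x‖ ≤ ε * ‖x‖)
    (N : X × Y → ℝ)
    (hN : N = fun p => sInf {r : ℝ | ∃ w : X, r = ‖p.1 - w‖ + ‖p.2 + f w‖ + ε * ‖w‖}) :
    (∀ (x : X) (y : Y), ‖x + T y‖ ≤ N (x, y)) ∧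
    (∀ x : X, x + T 0 = x) ∧ (∀ y : Y, (0 : X) + T y = T y) :=
  stmt_8_general ε f T hT hTf N hN
end

section
/- Let E be a finite-dimensional real normed space and V ⊆ E a subspace which is 1-complemented (there is a linear projection P : E → V with ‖P‖ ≤ 1 and P|_V = id). Let ‖·‖₀ be a norm on E with ‖x‖_E ≤ ‖x‖₀ ≤ (1+ε)‖x‖_E, let G = conv(B₀ ∪ B_V) where B₀ is the unit ball of ‖·‖₀ and B_V the unit ball of V (inside E), and let ‖·‖_W be the Minkowski functional of G. Then ‖x‖_E ≤ ‖x‖_W ≤ (1+ε)‖x‖_E for all x ∈ E, and ‖x‖_W = ‖x‖_E for all x ∈ V. -/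
/-!
`G` lies between the ball of radius `(1 + ε)⁻¹` (inside `B₀`) and the closed unit ball (which
contains both `B₀` and `B_V`), so its gauge lies between `‖·‖` and `(1 + ε)‖·‖`. For `x ∈ V`,
`x / ‖x‖ ∈ B_V ⊆ G` gives the reverse inequality `gauge G x ≤ ‖x‖`.
-/

open Metric Set

theorem ball_inv_subset_setOf_le_one {E : Type*} [SeminormedAddCommGroup E] {N : E → ℝ} {c : ℝ}
    (hc : 0 < c) (hN : ∀ x, N x ≤ c * ‖x‖) : ball (0 : E) c⁻¹ ⊆ {x | N x ≤ 1} := fun x hx => by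
  have hx : c * ‖x‖ < 1 := by
    rwa [mem_ball_zero_iff, ← mul_one c⁻¹, lt_inv_mul_iff₀ hc] at hx
  exact (hN x).trans hx.le

theorem norm_inv_norm_smul_le_one {E : Type*} [SeminormedAddCommGroup E] [NormedSpace ℝ E]
    (x : E) : ‖‖x‖⁻¹ • x‖ ≤ 1 := by
  rw [norm_smul, norm_inv, norm_norm]
  exact inv_mul_le_one_of_le₀ le_rfl (norm_nonneg x)

theorem gauge_le_norm_of_inv_norm_smul_mem {E : Type*} [NormedAddCommGroup E] [NormedSpace ℝ E]
    {s : Set E} {x : E} (hx : ‖x‖⁻¹ • x ∈ s) : gauge s x ≤ ‖x‖ := by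
  rcases eq_or_ne x 0 with rfl | hx₀
  · simp
  · exact gauge_le_of_mem (norm_nonneg x) <|
      (mem_smul_set_iff_inv_smul_mem₀ (norm_ne_zero_iff.2 hx₀) _ _).2 hx

theorem stmt_11_general {E : Type*} [NormedAddCommGroup E] [NormedSpace ℝ E]
    (V : Submodule ℝ E) (ε : ℝ) (hε : 0 < ε)
    (N₀ : E → ℝ)
    (hN₀low : ∀ x, ‖x‖ ≤ N₀ x) (hN₀up : ∀ x, N₀ x ≤ (1 + ε) * ‖x‖) :
    ∀ G : Set E,
      G = convexHull ℝ ({x : E | N₀ x ≤ 1} ∪ {x : E | x ∈ V ∧ ‖x‖ ≤ 1}) →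
      (∀ x : E, ‖x‖ ≤ gauge G x ∧ gauge G x ≤ (1 + ε) * ‖x‖) ∧
      (∀ x ∈ V, gauge G x = ‖x‖) := by
  intro G hG
  have h1ε : 0 < 1 + ε := by linarith
  have hball : ball 0 (1 + ε)⁻¹ ⊆ G := hG ▸
    (ball_inv_subset_setOf_le_one h1ε hN₀up).trans (subset_union_left.trans (subset_convexHull ℝ _))
  have hunit : G ⊆ closedBall 0 1 := hG ▸
    convexHull_min (union_subset (fun x hx => mem_closedBall_zero_iff.2 ((hN₀low x).trans hx))
      (fun x hx => mem_closedBall_zero_iff.2 hx.2)) (convex_closedBall 0 1)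
  have hlow (x : E) : ‖x‖ ≤ gauge G x := by
    simpa using le_gauge_of_subset_closedBall
      ((absorbent_ball_zero (inv_pos.2 h1ε)).mono hball) zero_le_one hunit (x := x)
  have hup (x : E) : gauge G x ≤ (1 + ε) * ‖x‖ := by
    simpa only [inv_mul_le_iff₀ h1ε] using mul_gauge_le_norm hball (x := x)
  have hupV (x : E) (hx : x ∈ V) : gauge G x ≤ ‖x‖ :=
    gauge_le_norm_of_inv_norm_smul_mem <| hG ▸ subset_convexHull ℝ _ <|
      Or.inr ⟨V.smul_mem _ hx, norm_inv_norm_smul_le_one x⟩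
  exact ⟨fun x => ⟨hlow x, hup x⟩, fun x hx => (hupV x hx).antisymm (hlow x)⟩

/-- the Minkowski functional of conv(B₀ ∪ B_V) is a norm
sandwiched between ‖·‖_E and (1+ε)‖·‖_E which agrees with ‖·‖_E on V. -/
theorem stmt_11 {E : Type*} [NormedAddCommGroup E] [NormedSpace ℝ E]
    [FiniteDimensional ℝ E]
    (V : Submodule ℝ E) (ε : ℝ) (hε : 0 < ε)
    (P : E →ₗ[ℝ] E) (hPrange : ∀ x, P x ∈ V) (hPid : ∀ x ∈ V, P x = x)
    (hPnorm : ∀ x, ‖P x‖ ≤ ‖x‖)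
    (N₀ : E → ℝ)
    (hN₀add : ∀ x y, N₀ (x + y) ≤ N₀ x + N₀ y)
    (hN₀smul : ∀ (a : ℝ) (x : E), N₀ (a • x) = |a| * N₀ x)
    (hN₀low : ∀ x, ‖x‖ ≤ N₀ x) (hN₀up : ∀ x, N₀ x ≤ (1 + ε) * ‖x‖) :
    ∀ G : Set E,
      G = convexHull ℝ ({x : E | N₀ x ≤ 1} ∪ {x : E | x ∈ V ∧ ‖x‖ ≤ 1}) →
      (∀ x : E, ‖x‖ ≤ gauge G x ∧ gauge G x ≤ (1 + ε) * ‖x‖) ∧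
      (∀ x ∈ V, gauge G x = ‖x‖) :=
  stmt_11_general V ε hε N₀ hN₀low hN₀up
end

section
/- Let X, Y, Z be normed spaces, and suppose (i, P) : Z → X and (j, Q) : Z → Y are projection-embedding pairs: i, j are isometric embeddings, ‖P‖ ≤ 1, ‖Q‖ ≤ 1, P∘i = id_Z, Q∘j = id_Z. Then there exist a normed space V, isometric embeddings i' : X → V, j' : Y → V, and norm-one projections P' : V → X, Q' : V → Y with P'∘i' = id_X, Q'∘j' = id_Y, such that i'∘i = j'∘j, P∘P' = Q∘Q', j∘P = Q'∘i', and i∘Q = P'∘j'. -/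
/-!
Glue `X` and `Y` along `Z` inside the `ℓ¹`-sum `X ⊕₁ Y`. The two maps
`(x, y) ↦ x + i (Q y)` and `(x, y) ↦ j (P x) + y` are contractions (triangle inequality plus
`‖i‖, ‖Q‖ ≤ 1`, resp. `‖j‖, ‖P‖ ≤ 1`), and both kill the pairs `(i z, -j z)`. Quotienting by the
intersection `N` of their kernels, they descend to contractive projections `P'`, `Q'` on
`V = (X ⊕₁ Y) ⧸ N`. The canonical maps `i' x = [(x, 0)]`, `j' y = [(0, y)]` are contractions
with left inverses `P'`, `Q'`, hence isometric, and `i' ∘ i = j' ∘ j` because `(i z, -j z) ∈ N`.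
-/

theorem norm_eq_of_leftInverse {E F : Type*} [Norm E] [Norm F] {e : E → F} {r : F → E}
    (hre : Function.LeftInverse r e) (he : ∀ x, ‖e x‖ ≤ ‖x‖) (hr : ∀ y, ‖r y‖ ≤ ‖y‖) (x : E) :
    ‖e x‖ = ‖x‖ :=
  le_antisymm (he x) (by simpa only [hre x] using hr (e x))

theorem Submodule.norm_liftQ_apply_le {R M N : Type*} [Ring R] [SeminormedAddCommGroup M]
    [Module R M] [SeminormedAddCommGroup N] [Module R N] (S : Submodule R M) (f : M →ₗ[R] N)
    (h : S ≤ LinearMap.ker f) (hf : ∀ m, ‖f m‖ ≤ ‖m‖) (v : M ⧸ S) :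
    ‖S.liftQ f h v‖ ≤ ‖v‖ := by
  refine le_of_forall_pos_le_add fun ε hε => ?_
  obtain ⟨m, rfl, hm⟩ := Submodule.Quotient.norm_mk_lt v hε
  exact (hf m).trans hm.le

theorem LinearMap.isClosed_ker_of_norm_le {𝕜 E F : Type*} [Ring 𝕜] [SeminormedAddCommGroup E]
    [Module 𝕜 E] [SeminormedAddCommGroup F] [Module 𝕜 F] [T1Space F] (f : E →ₗ[𝕜] F) {C : ℝ}
    (hf : ∀ x, ‖f x‖ ≤ C * ‖x‖) : IsClosed (LinearMap.ker f : Set E) :=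
  (f.mkContinuous C hf).isClosed_ker

namespace Amalgam

variable {R Z X Y : Type*} [Ring R] [SeminormedAddCommGroup Z] [Module R Z]
  [SeminormedAddCommGroup X] [Module R X] [SeminormedAddCommGroup Y] [Module R Y]
  (i : Z →ₗ[R] X) (P : X →ₗ[R] Z) (j : Z →ₗ[R] Y) (Q : Y →ₗ[R] Z)

def sumProjFst : WithLp 1 (X × Y) →ₗ[R] X :=
  WithLp.fstₗ 1 R X Y + i ∘ₗ Q ∘ₗ WithLp.sndₗ 1 R X Y

def sumProjSnd : WithLp 1 (X × Y) →ₗ[R] Y :=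
  j ∘ₗ P ∘ₗ WithLp.fstₗ 1 R X Y + WithLp.sndₗ 1 R X Y

def relations : Submodule R (WithLp 1 (X × Y)) :=
  LinearMap.ker (sumProjFst i Q) ⊓ LinearMap.ker (sumProjSnd P j)

abbrev _root_.Amalgam : Type _ :=
  WithLp 1 (X × Y) ⧸ relations i P j Q

def inl : X →ₗ[R] Amalgam i P j Q :=
  (relations i P j Q).mkQ ∘ₗ (WithLp.linearEquiv 1 R (X × Y)).symm.toLinearMap ∘ₗ
    LinearMap.inl R X Y

def inr : Y →ₗ[R] Amalgam i P j Q :=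
  (relations i P j Q).mkQ ∘ₗ (WithLp.linearEquiv 1 R (X × Y)).symm.toLinearMap ∘ₗ
    LinearMap.inr R X Y

def fst : Amalgam i P j Q →ₗ[R] X :=
  (relations i P j Q).liftQ (sumProjFst i Q) inf_le_left

def snd : Amalgam i P j Q →ₗ[R] Y :=
  (relations i P j Q).liftQ (sumProjSnd P j) inf_le_right

variable {i P j Q}

theorem sumProjFst_toLp (x : X) (y : Y) : sumProjFst i Q (WithLp.toLp 1 (x, y)) = x + i (Q y) :=
  rfl

theorem sumProjSnd_toLp (x : X) (y : Y) : sumProjSnd P j (WithLp.toLp 1 (x, y)) = j (P x) + y :=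
  rfl

@[simp] theorem fst_inl (x : X) : fst i P j Q (inl i P j Q x) = x := by
  simp [fst, inl, sumProjFst]

@[simp] theorem fst_inr (y : Y) : fst i P j Q (inr i P j Q y) = i (Q y) := by
  simp [fst, inr, sumProjFst]

@[simp] theorem snd_inl (x : X) : snd i P j Q (inl i P j Q x) = j (P x) := by
  simp [snd, inl, sumProjSnd]

@[simp] theorem snd_inr (y : Y) : snd i P j Q (inr i P j Q y) = y := by
  simp [snd, inr, sumProjSnd]

theorem norm_sumProjFst_le (hi : ∀ z, ‖i z‖ ≤ ‖z‖) (hQ : ∀ y, ‖Q y‖ ≤ ‖y‖)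
    (w : WithLp 1 (X × Y)) : ‖sumProjFst i Q w‖ ≤ ‖w‖ := by
  rw [WithLp.prod_norm_eq_of_L1]
  calc ‖w.fst + i (Q w.snd)‖ ≤ ‖w.fst‖ + ‖i (Q w.snd)‖ := norm_add_le _ _
    _ ≤ ‖w.fst‖ + ‖w.snd‖ := by gcongr; exact (hi _).trans (hQ _)

theorem norm_fst_le (hi : ∀ z, ‖i z‖ ≤ ‖z‖) (hQ : ∀ y, ‖Q y‖ ≤ ‖y‖) (v : Amalgam i P j Q) :
    ‖fst i P j Q v‖ ≤ ‖v‖ :=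
  Submodule.norm_liftQ_apply_le _ _ _ (norm_sumProjFst_le hi hQ) v

theorem norm_sumProjSnd_le (hP : ∀ x, ‖P x‖ ≤ ‖x‖) (hj : ∀ z, ‖j z‖ ≤ ‖z‖)
    (w : WithLp 1 (X × Y)) : ‖sumProjSnd P j w‖ ≤ ‖w‖ := by
  rw [WithLp.prod_norm_eq_of_L1]
  calc ‖j (P w.fst) + w.snd‖ ≤ ‖j (P w.fst)‖ + ‖w.snd‖ := norm_add_le _ _
    _ ≤ ‖w.fst‖ + ‖w.snd‖ := by gcongr; exact (hj _).trans (hP _)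

theorem norm_snd_le (hP : ∀ x, ‖P x‖ ≤ ‖x‖) (hj : ∀ z, ‖j z‖ ≤ ‖z‖) (v : Amalgam i P j Q) :
    ‖snd i P j Q v‖ ≤ ‖v‖ :=
  Submodule.norm_liftQ_apply_le _ _ _ (norm_sumProjSnd_le hP hj) v

theorem norm_inl (hi : ∀ z, ‖i z‖ ≤ ‖z‖) (hQ : ∀ y, ‖Q y‖ ≤ ‖y‖) (x : X) :
    ‖inl i P j Q x‖ = ‖x‖ := by
  refine norm_eq_of_leftInverse (r := fst i P j Q) fst_inl (fun x => ?_) (norm_fst_le hi hQ) x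
  calc ‖inl i P j Q x‖ ≤ ‖WithLp.toLp 1 (x, (0 : Y))‖ := Submodule.Quotient.norm_mk_le _ _
    _ = ‖x‖ := WithLp.norm_toLp_fst 1 X Y x

theorem norm_inr (hP : ∀ x, ‖P x‖ ≤ ‖x‖) (hj : ∀ z, ‖j z‖ ≤ ‖z‖) (y : Y) :
    ‖inr i P j Q y‖ = ‖y‖ := by
  refine norm_eq_of_leftInverse (r := snd i P j Q) snd_inr (fun y => ?_) (norm_snd_le hP hj) y
  calc ‖inr i P j Q y‖ ≤ ‖WithLp.toLp 1 ((0 : X), y)‖ := Submodule.Quotient.norm_mk_le _ _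
    _ = ‖y‖ := WithLp.norm_toLp_snd 1 X Y y

theorem inl_comp_eq_inr_comp (hPi : ∀ z, P (i z) = z) (hQj : ∀ z, Q (j z) = z) (z : Z) :
    inl i P j Q (i z) = inr i P j Q (j z) := by
  change Submodule.Quotient.mk (WithLp.toLp 1 (i z, 0)) =
    Submodule.Quotient.mk (WithLp.toLp 1 (0, j z))
  rw [Submodule.Quotient.eq, ← WithLp.toLp_sub, Prod.mk_sub_mk, sub_zero, zero_sub]
  exact ⟨by simp [sumProjFst_toLp, hQj], by simp [sumProjSnd_toLp, hPi]⟩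

theorem comp_fst_eq_comp_snd (hPi : ∀ z, P (i z) = z) (hQj : ∀ z, Q (j z) = z)
    (v : Amalgam i P j Q) : P (fst i P j Q v) = Q (snd i P j Q v) := by
  obtain ⟨⟨x, y⟩, rfl⟩ := Submodule.Quotient.mk_surjective _ v
  change P (sumProjFst i Q (WithLp.toLp 1 (x, y))) = Q (sumProjSnd P j (WithLp.toLp 1 (x, y)))
  simp only [sumProjFst_toLp, sumProjSnd_toLp, map_add, hPi, hQj, add_comm]

theorem isClosed_relations [T1Space X] [T1Space Y] (hi : ∀ z, ‖i z‖ ≤ ‖z‖)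
    (hP : ∀ x, ‖P x‖ ≤ ‖x‖) (hj : ∀ z, ‖j z‖ ≤ ‖z‖) (hQ : ∀ y, ‖Q y‖ ≤ ‖y‖) :
    IsClosed (relations i P j Q : Set (WithLp 1 (X × Y))) :=
  (LinearMap.isClosed_ker_of_norm_le _ (C := 1) (by simpa using norm_sumProjFst_le hi hQ)).inter
    (LinearMap.isClosed_ker_of_norm_le _ (C := 1) (by simpa using norm_sumProjSnd_le hP hj))

end Amalgam

open Amalgam in
/-- amalgamation of projection-embedding pairs. -/
theorem stmt_13 {Z X Y : Type} [NormedAddCommGroup Z] [NormedSpace ℝ Z]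
    [NormedAddCommGroup X] [NormedSpace ℝ X]
    [NormedAddCommGroup Y] [NormedSpace ℝ Y]
    (i : Z →ₗ[ℝ] X) (P : X →ₗ[ℝ] Z)
    (j : Z →ₗ[ℝ] Y) (Q : Y →ₗ[ℝ] Z)
    (hi : ∀ z, ‖i z‖ = ‖z‖) (hP : ∀ x, ‖P x‖ ≤ ‖x‖) (hPi : ∀ z, P (i z) = z)
    (hj : ∀ z, ‖j z‖ = ‖z‖) (hQ : ∀ y, ‖Q y‖ ≤ ‖y‖) (hQj : ∀ z, Q (j z) = z) :
    ∃ (V : Type) (_ : NormedAddCommGroup V) (_ : NormedSpace ℝ V)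
      (i' : X →ₗ[ℝ] V) (P' : V →ₗ[ℝ] X) (j' : Y →ₗ[ℝ] V) (Q' : V →ₗ[ℝ] Y),
      (∀ x, ‖i' x‖ = ‖x‖) ∧ (∀ v, ‖P' v‖ ≤ ‖v‖) ∧ (∀ x, P' (i' x) = x) ∧
      (∀ y, ‖j' y‖ = ‖y‖) ∧ (∀ v, ‖Q' v‖ ≤ ‖v‖) ∧ (∀ y, Q' (j' y) = y) ∧
      (∀ z, i' (i z) = j' (j z)) ∧
      (∀ v, P (P' v) = Q (Q' v)) ∧
      (∀ x, Q' (i' x) = j (P x)) ∧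
      (∀ y, P' (j' y) = i (Q y)) := by
  have hi_le z := (hi z).le
  have hj_le z := (hj z).le
  have hclosed := isClosed_relations hi_le hP hj_le hQ
  exact ⟨Amalgam i P j Q, inferInstance, inferInstance,
    inl i P j Q, fst i P j Q, inr i P j Q, snd i P j Q,
    norm_inl hi_le hQ, norm_fst_le hi_le hQ, fst_inl,
    norm_inr hP hj_le, norm_snd_le hP hj_le, snd_inr,
    inl_comp_eq_inr_comp hPi hQj, comp_fst_eq_comp_snd hPi hQj, snd_inl, fst_inr⟩
end

section
/- Let ε_n be a sequence of positive reals with Σ ε_n < ∞. Let X, Y be Banach spaces, (A_n) an increasing sequence of closed subspaces of X with dense union, (B_n) an increasing sequence of closed subspaces of Y with dense union, and f_n : A_n → B_n, g_n : B_n → A_{n+1} linear maps of norm at most 1 satisfying ‖g_n(f_n a) − a‖ ≤ ε_n‖a‖ for all a ∈ A_n, ‖f_{n+1}(g_n b) − b‖ ≤ ε_n‖b‖ for all b ∈ B_n, and such that ‖f_{n+1}|_{A_n} − f_n‖ ≤ 2ε_n and ‖g_{n+1}|_{B_n} − g_n‖ ≤ 2ε_n. Then the maps f_n converge pointwise on ∪A_n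 to a map extending to a linear bijective isometry f_∞ : X → Y, with inverse similarly obtained from the g_n. -/
open Filter Topology

/-!
Consecutive `f n` differ by at most `2 ε n` on `A n`, so for `a ∈ A m` the sequence `f n a` is
Cauchy and lies within `2 (∑_{k ≥ n} ε k) ‖a‖` of its limit `F a`. The limit is a linear
contraction on `⋃ A n`, which extends by density to `X`; `G` is obtained from the `g n` in the same
way. Now `G (F a) = lim G (f n a)`, and `G (f n a)` is within `(2 ∑_{k ≥ n} ε k + ε n) ‖a‖` of `a`
because `g n (f n a)` is; so `G ∘ F = id`, likewise `F ∘ G = id`, and two mutually inverse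
contractions are isometries.
-/

noncomputable section

structure ContractionChain (E F : Type*) [NormedAddCommGroup E] [NormedSpace ℝ E]
    [NormedAddCommGroup F] [NormedSpace ℝ F] where
  A : ℕ → Submodule ℝ E
  mono : Monotone A
  map : ∀ n, A n →ₗ[ℝ] F
  err : ℕ → ℝ
  summable_err : Summable err
  norm_map_le : ∀ n (a : A n), ‖map n a‖ ≤ ‖a‖
  norm_map_succ_sub_le : ∀ n (a : A n),
    ‖map (n + 1) (Submodule.inclusion (mono n.le_succ) a) - map n a‖ ≤ err n * ‖a‖

namespace ContractionChain

variable {E F : Type*} [NormedAddCommGroup E] [NormedSpace ℝ E]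
  [NormedAddCommGroup F] [NormedSpace ℝ F] (c : ContractionChain E F) {m : ℕ}

def seq (a : c.A m) (k : ℕ) : F :=
  c.map (m + k) (Submodule.inclusion (c.mono (Nat.le_add_right m k)) a)

def tail (n : ℕ) : ℝ := ∑' k, c.err (n + k)

theorem tendsto_tail : Tendsto c.tail atTop (𝓝 0) :=
  (tendsto_sum_nat_add c.err).congr fun n => tsum_congr fun k => by rw [add_comm]

theorem dist_seq_le (a : c.A m) (k : ℕ) :
    dist (c.seq a k) (c.seq a (k + 1)) ≤ c.err (m + k) * ‖a‖ := by
  rw [dist_comm, dist_eq_norm]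
  exact c.norm_map_succ_sub_le (m + k) (Submodule.inclusion (c.mono (Nat.le_add_right m k)) a)

theorem summable_err_add_mul (r : ℝ) : Summable fun k => c.err (m + k) * r :=
  (c.summable_err.comp_injective (add_right_injective m)).mul_right r

open Classical in
def mapOrZero (n : ℕ) (x : E) : F := if h : x ∈ c.A n then c.map n ⟨x, h⟩ else 0

theorem seq_eq_mapOrZero (a : c.A m) (k : ℕ) : c.seq a k = c.mapOrZero (m + k) a := by
  rw [mapOrZero, dif_pos (c.mono (Nat.le_add_right m k) a.2)]
  rfl

theorem exists_mem_of_mem_iSup {x : E} (hx : x ∈ ⨆ n, c.A n) : ∃ n, x ∈ c.A n :=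
  (Submodule.mem_iSup_of_chain ⟨c.A, c.mono⟩ x).1 hx

theorem exists_mem_of_mem_iSup₂ {x y : E} (hx : x ∈ ⨆ n, c.A n) (hy : y ∈ ⨆ n, c.A n) :
    ∃ n, x ∈ c.A n ∧ y ∈ c.A n := by
  obtain ⟨i, hi⟩ := c.exists_mem_of_mem_iSup hx
  obtain ⟨j, hj⟩ := c.exists_mem_of_mem_iSup hy
  exact ⟨max i j, c.mono (le_max_left i j) hi, c.mono (le_max_right i j) hj⟩

theorem denseRange_subtype_iSup (hc : Dense (⋃ n, (c.A n : Set E))) :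
    DenseRange (⨆ n, c.A n).subtype := by
  rwa [DenseRange, Submodule.coe_subtype, Subtype.range_coe,
    Submodule.coe_iSup_of_directed c.A c.mono.directed_le]

variable [CompleteSpace F]

def pointwiseLim (x : E) : F := limUnder atTop fun n => c.mapOrZero n x

theorem tendsto_seq_pointwiseLim (a : c.A m) :
    Tendsto (c.seq a) atTop (𝓝 (c.pointwiseLim a)) := by
  obtain ⟨L, hL⟩ := cauchySeq_tendsto_of_complete <|
    cauchySeq_of_dist_le_of_summable _ (c.dist_seq_le a) (c.summable_err_add_mul ‖a‖)
  have hev : Tendsto (fun n => c.mapOrZero n a) atTop (𝓝 L) := by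
    rw [← tendsto_add_atTop_iff_nat m]
    exact hL.congr fun k => by rw [seq_eq_mapOrZero, add_comm]
  rwa [pointwiseLim, hev.limUnder_eq]

theorem pointwiseLim_add (a b : c.A m) :
    c.pointwiseLim (a + b : c.A m) = c.pointwiseLim a + c.pointwiseLim b :=
  tendsto_nhds_unique (c.tendsto_seq_pointwiseLim (a + b)) <|
    ((c.tendsto_seq_pointwiseLim a).add (c.tendsto_seq_pointwiseLim b)).congr fun k => by simp [seq]

theorem pointwiseLim_smul (r : ℝ) (a : c.A m) :
    c.pointwiseLim (r • a : c.A m) = r • c.pointwiseLim a :=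
  tendsto_nhds_unique (c.tendsto_seq_pointwiseLim (r • a)) <|
    ((c.tendsto_seq_pointwiseLim a).const_smul r).congr fun k => by simp [seq]

theorem norm_pointwiseLim_le (a : c.A m) : ‖c.pointwiseLim a‖ ≤ ‖a‖ :=
  le_of_tendsto' (c.tendsto_seq_pointwiseLim a).norm fun k => c.norm_map_le (m + k) _

def limOnSup : ↥(⨆ n, c.A n) →ₗ[ℝ] F where
  toFun x := c.pointwiseLim x
  map_add' x y := by
    obtain ⟨n, hx, hy⟩ := c.exists_mem_of_mem_iSup₂ x.2 y.2
    exact c.pointwiseLim_add ⟨x, hx⟩ ⟨y, hy⟩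
  map_smul' r x := by
    obtain ⟨n, hx⟩ := c.exists_mem_of_mem_iSup x.2
    exact c.pointwiseLim_smul r ⟨x, hx⟩

theorem norm_limOnSup_le (x : ↥(⨆ n, c.A n)) :
    ‖c.limOnSup x‖ ≤ 1 * ‖(⨆ n, c.A n).subtype x‖ := by
  obtain ⟨n, hx⟩ := c.exists_mem_of_mem_iSup x.2
  rw [one_mul]
  exact c.norm_pointwiseLim_le ⟨x, hx⟩

/-- Junk unless `⋃ n, A n` is dense. -/
def lim : E →L[ℝ] F := c.limOnSup.extendOfNorm (⨆ n, c.A n).subtype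

variable {c} (hc : Dense (⋃ n, (c.A n : Set E)))
include hc

theorem lim_apply (a : c.A m) : c.lim a = c.pointwiseLim a :=
  LinearMap.extendOfNorm_eq (c.denseRange_subtype_iSup hc) ⟨1, c.norm_limOnSup_le⟩
    ⟨a, Submodule.mem_iSup_of_mem m a.2⟩

theorem norm_lim_le (x : E) : ‖c.lim x‖ ≤ ‖x‖ :=
  (LinearMap.norm_extendOfNorm_apply_le (c.denseRange_subtype_iSup hc) 1 c.norm_limOnSup_le
    x).trans_eq (one_mul _)

theorem tendsto_seq_lim (a : c.A m) : Tendsto (c.seq a) atTop (𝓝 (c.lim a)) := by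
  rw [lim_apply hc]
  exact c.tendsto_seq_pointwiseLim a

theorem norm_map_sub_lim_le (a : c.A m) : ‖c.map m a - c.lim a‖ ≤ c.tail m * ‖a‖ := by
  rw [← dist_eq_norm, tail, ← tsum_mul_right]
  exact dist_le_tsum_of_dist_le_of_tendsto₀ _ (c.dist_seq_le a) (c.summable_err_add_mul ‖a‖)
    (tendsto_seq_lim hc a)

theorem norm_lim_sub_le_of_norm_map_sub_le (a : c.A m) {y : F} {r s : ℝ} (ha : ‖a‖ ≤ r)
    (hy : ‖c.map m a - y‖ ≤ s) : ‖c.lim a - y‖ ≤ |c.tail m| * r + s :=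
  calc ‖c.lim a - y‖ ≤ ‖c.map m a - c.lim a‖ + ‖c.map m a - y‖ := by
        rw [norm_sub_rev (c.map m a)]; exact norm_sub_le_norm_sub_add_norm_sub _ _ _
    _ ≤ c.tail m * ‖a‖ + s := add_le_add (norm_map_sub_lim_le hc a) hy
    _ ≤ |c.tail m| * r + s := by
        gcongr
        exact le_abs_self _

theorem leftInverse_lim {G : F →L[ℝ] E} {t : ℕ → ℝ} (ht : Tendsto t atTop (𝓝 0))
    (hG : ∀ n (a : c.A n), ‖G (c.map n a) - a‖ ≤ t n * ‖a‖) :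
    Function.LeftInverse G c.lim := by
  have hunion : ∀ m (a : c.A m), G (c.lim a) = a := fun m a =>
    tendsto_nhds_unique ((G.continuous.tendsto _).comp (tendsto_seq_lim hc a)) <| by
      rw [tendsto_iff_norm_sub_tendsto_zero]
      refine squeeze_zero (fun _ => norm_nonneg _) (fun k => hG (m + k) _) ?_
      simpa [add_comm] using ((tendsto_add_atTop_iff_nat m).2 ht).mul_const ‖(a : E)‖
  refine congrFun (Continuous.ext_on hc (by fun_prop) continuous_id ?_)
  rintro x ⟨_, ⟨m, rfl⟩, hx⟩
  exact hunion m ⟨x, hx⟩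

end ContractionChain

def LinearIsometryEquiv.ofContractions {𝕜 E F : Type*} [NormedField 𝕜]
    [SeminormedAddCommGroup E] [NormedSpace 𝕜 E] [SeminormedAddCommGroup F] [NormedSpace 𝕜 F]
    (f : E →L[𝕜] F) (g : F →L[𝕜] E) (h₁ : Function.LeftInverse g f)
    (h₂ : Function.RightInverse g f) (hf : ∀ x, ‖f x‖ ≤ ‖x‖) (hg : ∀ y, ‖g y‖ ≤ ‖y‖) :
    E ≃ₗᵢ[𝕜] F where
  toLinearEquiv := (ContinuousLinearEquiv.equivOfInverse f g h₁ h₂).toLinearEquiv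
  norm_map' x := le_antisymm (hf x) <| by
    have := hg (f x)
    rwa [h₁ x] at this

end

theorem stmt_14_general {X Y : Type*} [NormedAddCommGroup X] [NormedSpace ℝ X]
    [CompleteSpace X] [NormedAddCommGroup Y] [NormedSpace ℝ Y] [CompleteSpace Y]
    (ε : ℕ → ℝ) (hεsum : Summable ε)
    (A : ℕ → Submodule ℝ X) (hA : Monotone A)
    (hAdense : Dense (⋃ n, (A n : Set X)))
    (B : ℕ → Submodule ℝ Y) (hB : Monotone B)
    (hBdense : Dense (⋃ n, (B n : Set Y)))
    (f : ∀ n, A n →ₗ[ℝ] B n) (g : ∀ n, B n →ₗ[ℝ] A (n + 1))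
    (hfnorm : ∀ n (a : A n), ‖f n a‖ ≤ ‖a‖)
    (hgnorm : ∀ n (b : B n), ‖g n b‖ ≤ ‖b‖)
    (hgf : ∀ n (a : A n), ‖((g n (f n a) : X)) - (a : X)‖ ≤ ε n * ‖a‖)
    (hfg : ∀ n (b : B n), ‖((f (n + 1) (g n b) : Y)) - (b : Y)‖ ≤ ε n * ‖b‖)
    (hfstep : ∀ n (a : A n),
      ‖((f (n + 1) (Submodule.inclusion (hA (Nat.le_succ n)) a) : Y)) - ((f n a : Y))‖
        ≤ 2 * ε n * ‖a‖)
    (hgstep : ∀ n (b : B n),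
      ‖((g (n + 1) (Submodule.inclusion (hB (Nat.le_succ n)) b) : X)) - ((g n b : X))‖
        ≤ 2 * ε n * ‖b‖) :
    ∃ F : X ≃ₗᵢ[ℝ] Y,
      (∀ m (a : A m),
        Tendsto (fun k : ℕ =>
            ((f (m + k) (Submodule.inclusion (hA (Nat.le_add_right m k)) a) : Y)))
          atTop (𝓝 (F (a : X)))) ∧
      (∀ m (b : B m),
        Tendsto (fun k : ℕ =>
            ((g (m + k) (Submodule.inclusion (hB (Nat.le_add_right m k)) b) : X)))
          atTop (𝓝 (F.symm (b : Y)))) := by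
  let c : ContractionChain X Y :=
    ⟨A, hA, fun n => (B n).subtype ∘ₗ f n, fun n => 2 * ε n, hεsum.mul_left 2, hfnorm, hfstep⟩
  let d : ContractionChain Y X :=
    ⟨B, hB, fun n => (A (n + 1)).subtype ∘ₗ g n, fun n => 2 * ε n, hεsum.mul_left 2, hgnorm,
      hgstep⟩
  have hε : Tendsto ε atTop (𝓝 0) := hεsum.tendsto_atTop_zero
  have hdc : Function.LeftInverse d.lim c.lim :=
    c.leftInverse_lim hAdense (t := fun n => |d.tail n| + ε n)
      (by simpa using d.tendsto_tail.abs.add hε) fun n a => by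
        rw [add_mul]
        exact d.norm_lim_sub_le_of_norm_map_sub_le hBdense (f n a) (hfnorm n a) (hgf n a)
  have hcd : Function.LeftInverse c.lim d.lim :=
    d.leftInverse_lim hBdense (t := fun n => |c.tail (n + 1)| + ε n)
      (by simpa using (c.tendsto_tail.comp (tendsto_add_atTop_nat 1)).abs.add hε) fun n b => by
        rw [add_mul]
        exact c.norm_lim_sub_le_of_norm_map_sub_le hAdense (g n b) (hgnorm n b) (hfg n b)
  exact ⟨.ofContractions c.lim d.lim hdc hcd (c.norm_lim_le hAdense) (d.norm_lim_le hBdense),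
    fun m a => c.tendsto_seq_lim hAdense a, fun m b => d.tendsto_seq_lim hBdense b⟩

/-- a back-and-forth system of almost-isometries between dense
chains of closed subspaces with summable errors yields a bijective linear
isometry between the Banach spaces. -/
theorem stmt_14 {X Y : Type*} [NormedAddCommGroup X] [NormedSpace ℝ X]
    [CompleteSpace X] [NormedAddCommGroup Y] [NormedSpace ℝ Y] [CompleteSpace Y]
    (ε : ℕ → ℝ) (hεpos : ∀ n, 0 < ε n) (hεsum : Summable ε)
    (A : ℕ → Submodule ℝ X) (hA : Monotone A)
    (hAclosed : ∀ n, IsClosed (A n : Set X))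
    (hAdense : Dense (⋃ n, (A n : Set X)))
    (B : ℕ → Submodule ℝ Y) (hB : Monotone B)
    (hBclosed : ∀ n, IsClosed (B n : Set Y))
    (hBdense : Dense (⋃ n, (B n : Set Y)))
    (f : ∀ n, A n →ₗ[ℝ] B n) (g : ∀ n, B n →ₗ[ℝ] A (n + 1))
    (hfnorm : ∀ n (a : A n), ‖f n a‖ ≤ ‖a‖)
    (hgnorm : ∀ n (b : B n), ‖g n b‖ ≤ ‖b‖)
    (hgf : ∀ n (a : A n), ‖((g n (f n a) : X)) - (a : X)‖ ≤ ε n * ‖a‖)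
    (hfg : ∀ n (b : B n), ‖((f (n + 1) (g n b) : Y)) - (b : Y)‖ ≤ ε n * ‖b‖)
    (hfstep : ∀ n (a : A n),
      ‖((f (n + 1) (Submodule.inclusion (hA (Nat.le_succ n)) a) : Y)) - ((f n a : Y))‖
        ≤ 2 * ε n * ‖a‖)
    (hgstep : ∀ n (b : B n),
      ‖((g (n + 1) (Submodule.inclusion (hB (Nat.le_succ n)) b) : X)) - ((g n b : X))‖
        ≤ 2 * ε n * ‖b‖) :
    ∃ F : X ≃ₗᵢ[ℝ] Y,
      (∀ m (a : A m),
        Tendsto (fun k : ℕ =>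
            ((f (m + k) (Submodule.inclusion (hA (Nat.le_add_right m k)) a) : Y)))
          atTop (𝓝 (F (a : X)))) ∧
      (∀ m (b : B m),
        Tendsto (fun k : ℕ =>
            ((g (m + k) (Submodule.inclusion (hB (Nat.le_add_right m k)) b) : X)))
          atTop (𝓝 (F.symm (b : Y)))) :=
  stmt_14_general ε hεsum A hA hAdense B hB hBdense f g hfnorm hgnorm hgf hfg hfstep hgstep
end

section
/- Let (f_n) be a sequence of linear maps, f_n : A_n → Z, where (A_n) is an increasing chain of subspaces of a Banach space X with dense union and Z is a Banach space, such that each ‖f_n‖ ≤ 1, each f_n is an ε_n-isometry with ε_n → 0, and ‖f_{n+1}|_{A_n} − f_n‖ ≤ δ_n with Σ δ_n < ∞. Then there is a unique continuous linear map f : X → Z with ‖f‖ ≤ 1 such that f|_{A_m} = lim_{n→∞} f_n|_{A_m} for every m, and if moreover Σ_{k≥n} δ_k + ε_n → 0, then f is an isometric embedding. -/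
/-!
On `A m` consecutive maps `f (m + k)` differ by at most `δ (m + k) * ‖a‖`, so by summability of
`δ` they converge pointwise; the limit is linear of norm `≤ 1` on the dense subspace `⋃ n, A n`
and extends by continuity to `X`. On `A n` the limit is within `(∑_{k ≥ n} δ k) * ‖a‖` of `f n`,
which shrinks norms by at most the factor `1 - ε n`; hence `‖F a‖ ≥ (1 - ∑_{k ≥ n} δ k - ε n) ‖a‖`
for all large `n`, and letting `n → ∞` and using density gives `‖F x‖ = ‖x‖`.
-/

open Filter Topology

theorem isLinearMap_of_tendsto_of_eventually {α R M N : Type*} [Semiring R] [AddCommMonoid M]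
    [Module R M] [AddCommMonoid N] [Module R N] [TopologicalSpace N] [T2Space N]
    [ContinuousAdd N] [ContinuousConstSMul R N] {l : Filter α} [l.NeBot]
    {u : α → M → N} {g : M → N} (hg : ∀ x, Tendsto (fun j => u j x) l (𝓝 (g x)))
    (hadd : ∀ x y, ∀ᶠ j in l, u j (x + y) = u j x + u j y)
    (hsmul : ∀ (c : R) x, ∀ᶠ j in l, u j (c • x) = c • u j x) : IsLinearMap R g where
  map_add x y := tendsto_nhds_unique (hg (x + y)) <|
    ((hg x).add (hg y)).congr' <| (hadd x y).mono fun _ h => h.symm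
  map_smul c x := tendsto_nhds_unique (hg (c • x)) <|
    ((hg x).const_smul c).congr' <| (hsmul c x).mono fun _ h => h.symm

section Extension

variable {𝕜 X Z : Type*} [NontriviallyNormedField 𝕜] [NormedAddCommGroup X] [NormedSpace 𝕜 X]
  [NormedAddCommGroup Z] [NormedSpace 𝕜 Z] [CompleteSpace Z]

theorem LinearMap.exists_extension_norm_le_of_dense {S : Submodule 𝕜 X} (hS : Dense (S : Set X))
    (g : S →ₗ[𝕜] Z) (hg : ∀ s, ‖g s‖ ≤ ‖s‖) :
    ∃ F : X →L[𝕜] Z, (∀ x, ‖F x‖ ≤ ‖x‖) ∧ ∀ s : S, F s = g s := by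
  have hrange : DenseRange S.subtypeL := by
    rwa [DenseRange, Submodule.coe_subtypeL, Submodule.coe_subtype, Subtype.range_coe]
  have hind : IsUniformInducing S.subtypeL := isUniformEmbedding_subtype_val.isUniformInducing
  set G := g.mkContinuous 1 fun s => by simpa using hg s
  have hFG : ∀ s : S, G.extend S.subtypeL s = g s := G.extend_eq hrange hind
  refine ⟨G.extend S.subtypeL, fun x => ?_, hFG⟩
  refine hS.induction (P := fun x => ‖G.extend S.subtypeL x‖ ≤ ‖x‖) (fun y hy => ?_)
    (isClosed_le (by fun_prop) (by fun_prop)) x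
  exact (hFG ⟨y, hy⟩).symm ▸ hg ⟨y, hy⟩

end Extension

section Chain

variable {𝕜 X Z : Type*} [NontriviallyNormedField 𝕜] [NormedAddCommGroup X] [NormedSpace 𝕜 X]
  [NormedAddCommGroup Z] [NormedSpace 𝕜 Z] {A : ℕ → Submodule 𝕜 X}

open Classical in
/-- Extending each `f n` by zero lets all of them act on `X`, so that the limit at a point of
`⋃ n, A n` does not depend on the level at which one starts. -/
noncomputable def chainApprox (f : ∀ n, A n →ₗ[𝕜] Z) (n : ℕ) (x : X) : Z :=
  if h : x ∈ A n then f n ⟨x, h⟩ else 0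

theorem chainApprox_of_mem (f : ∀ n, A n →ₗ[𝕜] Z) {n : ℕ} {x : X} (h : x ∈ A n) :
    chainApprox f n x = f n ⟨x, h⟩ :=
  dif_pos h

theorem tendsto_chainApprox_iff (hA : Monotone A) (f : ∀ n, A n →ₗ[𝕜] Z) {m : ℕ} (a : A m)
    {z : Z} :
    Tendsto (fun k => f (m + k) (Submodule.inclusion (hA (Nat.le_add_right m k)) a)) atTop
        (𝓝 z) ↔ Tendsto (fun j => chainApprox f j a) atTop (𝓝 z) := by
  rw [← tendsto_add_atTop_iff_nat (f := fun j => chainApprox f j a) m]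
  refine tendsto_congr fun k => ?_
  rw [add_comm k m, chainApprox_of_mem f (hA (Nat.le_add_right m k) a.2)]
  rfl

theorem exists_continuousLinearMap_tendsto_of_chain [CompleteSpace Z] (hA : Monotone A)
    (hdense : Dense (⋃ n, (A n : Set X))) (f : ∀ n, A n →ₗ[𝕜] Z)
    (hnorm : ∀ n (a : A n), ‖f n a‖ ≤ ‖a‖)
    (hconv : ∀ m (a : A m), ∃ z, Tendsto
      (fun k => f (m + k) (Submodule.inclusion (hA (Nat.le_add_right m k)) a)) atTop (𝓝 z)) :
    ∃ F : X →L[𝕜] Z, (∀ x, ‖F x‖ ≤ ‖x‖) ∧ ∀ m (a : A m), Tendsto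
      (fun k => f (m + k) (Submodule.inclusion (hA (Nat.le_add_right m k)) a)) atTop
        (𝓝 (F a)) := by
  set S := ⨆ n, A n
  have hS : (S : Set X) = ⋃ n, (A n : Set X) := Submodule.coe_iSup_of_directed A hA.directed_le
  have hlevel : ∀ s : S, ∃ m, (s : X) ∈ A m := fun s =>
    Set.mem_iUnion.1 <| by rw [← hS]; exact s.2
  have hev : ∀ s : S, ∀ᶠ j in atTop, (s : X) ∈ A j := fun s =>
    let ⟨m, hm⟩ := hlevel s
    (eventually_ge_atTop m).mono fun _ hj => hA hj hm
  have hconv' : ∀ s : S, ∃ z, Tendsto (fun j => chainApprox f j s) atTop (𝓝 z) := by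
    intro s
    obtain ⟨m, hm⟩ := hlevel s
    obtain ⟨z, hz⟩ := hconv m ⟨s, hm⟩
    exact ⟨z, (tendsto_chainApprox_iff hA f ⟨s, hm⟩).1 hz⟩
  choose g hg using hconv'
  have hlin : IsLinearMap 𝕜 g := by
    refine isLinearMap_of_tendsto_of_eventually hg (fun s t => ?_) (fun c s => ?_)
    · filter_upwards [hev s, hev t] with j hs ht
      simp only [Submodule.coe_add, chainApprox_of_mem f hs, chainApprox_of_mem f ht,
        chainApprox_of_mem f (add_mem hs ht), ← map_add, AddMemClass.mk_add_mk]
    · filter_upwards [hev s] with j hs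
      simp only [Submodule.coe_smul, chainApprox_of_mem f hs,
        chainApprox_of_mem f (Submodule.smul_mem _ c hs), ← map_smul, SetLike.mk_smul_mk]
  have hgnorm : ∀ s, ‖g s‖ ≤ ‖s‖ := fun s => le_of_tendsto (hg s).norm <| by
    filter_upwards [hev s] with j hj
    rw [chainApprox_of_mem f hj]
    exact hnorm j _
  obtain ⟨F, hFnorm, hFg⟩ :=
    (IsLinearMap.mk' g hlin).exists_extension_norm_le_of_dense (by rwa [hS]) hgnorm
  refine ⟨F, hFnorm, fun m a => (tendsto_chainApprox_iff hA f a).2 ?_⟩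
  have ha : (a : X) ∈ S := Submodule.mem_iSup_of_mem m a.2
  simpa only [hFg ⟨a, ha⟩, IsLinearMap.mk'_apply] using hg ⟨a, ha⟩

end Chain

section SummableSteps

variable {𝕜 X Z : Type*} [NontriviallyNormedField 𝕜] [NormedAddCommGroup X] [NormedSpace 𝕜 X]
  [NormedAddCommGroup Z] [NormedSpace 𝕜 Z] {A : ℕ → Submodule 𝕜 X} (hA : Monotone A)
  {f : ∀ n, A n →ₗ[𝕜] Z} {δ : ℕ → ℝ}
  (hstep : ∀ n (a : A n),
    ‖f (n + 1) (Submodule.inclusion (hA (Nat.le_succ n)) a) - f n a‖ ≤ δ n * ‖a‖)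
include hstep

theorem dist_chain_succ_le {m : ℕ} (a : A m) (k : ℕ) :
    dist (f (m + k) (Submodule.inclusion (hA (Nat.le_add_right m k)) a))
      (f (m + (k + 1)) (Submodule.inclusion (hA (Nat.le_add_right m (k + 1))) a)) ≤
        δ (m + k) * ‖a‖ := by
  rw [dist_comm, dist_eq_norm]
  exact hstep (m + k) (Submodule.inclusion _ a)

theorem cauchySeq_chain (hδ : Summable δ) {m : ℕ} (a : A m) :
    CauchySeq fun k => f (m + k) (Submodule.inclusion (hA (Nat.le_add_right m k)) a) :=
  cauchySeq_of_dist_le_of_summable _ (dist_chain_succ_le hA hstep a)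
    ((hδ.comp_injective (add_right_injective m)).mul_right _)

theorem norm_sub_le_tsum_of_tendsto_chain (hδ : Summable δ) {m : ℕ} (a : A m) {z : Z}
    (hz : Tendsto (fun k => f (m + k) (Submodule.inclusion (hA (Nat.le_add_right m k)) a))
      atTop (𝓝 z)) :
    ‖z - f m a‖ ≤ (∑' k, δ (m + k)) * ‖a‖ := by
  have := dist_le_tsum_of_dist_le_of_tendsto₀ _ (dist_chain_succ_le hA hstep a)
    ((hδ.comp_injective (add_right_injective m)).mul_right _) hz
  rwa [tsum_mul_right, dist_comm, dist_eq_norm] at this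

theorem norm_le_of_tendsto_chain {ε : ℕ → ℝ} (hδ : Summable δ)
    (hiso : ∀ n (a : A n), (1 - ε n) * ‖a‖ ≤ ‖f n a‖)
    (htail : Tendsto (fun n => (∑' k, δ (n + k)) + ε n) atTop (𝓝 0)) {F : X → Z}
    (hF : ∀ m (a : A m), Tendsto
      (fun k => f (m + k) (Submodule.inclusion (hA (Nat.le_add_right m k)) a)) atTop
        (𝓝 (F a)))
    {m : ℕ} (a : A m) : ‖(a : X)‖ ≤ ‖F a‖ := by
  have hbound : ∀ n ≥ m, (1 - ((∑' k, δ (n + k)) + ε n)) * ‖(a : X)‖ ≤ ‖F a‖ := by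
    intro n hn
    set b : A n := Submodule.inclusion (hA hn) a
    have hclose : ‖F a - f n b‖ ≤ (∑' k, δ (n + k)) * ‖(a : X)‖ :=
      norm_sub_le_tsum_of_tendsto_chain hA hstep hδ b (hF n b)
    have hlower : (1 - ε n) * ‖(a : X)‖ ≤ ‖f n b‖ := hiso n b
    have htri := norm_sub_norm_le (f n b) (F a)
    rw [norm_sub_rev] at htri
    linarith
  have hlim : Tendsto (fun n => (1 - ((∑' k, δ (n + k)) + ε n)) * ‖(a : X)‖) atTop
      (𝓝 ‖(a : X)‖) := by
    simpa using ((tendsto_const_nhds (x := (1 : ℝ))).sub htail).mul_const ‖(a : X)‖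
  exact le_of_tendsto hlim (eventually_atTop.2 ⟨m, hbound⟩)

end SummableSteps

theorem stmt_18_general {X Z : Type*} [NormedAddCommGroup X] [NormedSpace ℝ X]
    [NormedAddCommGroup Z] [NormedSpace ℝ Z] [CompleteSpace Z]
    (ε δ : ℕ → ℝ) (hδsum : Summable δ)
    (A : ℕ → Submodule ℝ X) (hA : Monotone A)
    (hAdense : Dense (⋃ n, (A n : Set X)))
    (f : ∀ n, A n →ₗ[ℝ] Z)
    (hfnorm : ∀ n (a : A n), ‖f n a‖ ≤ ‖a‖)
    (hfiso : ∀ n (a : A n), (1 - ε n) * ‖a‖ ≤ ‖f n a‖)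
    (hfstep : ∀ n (a : A n),
      ‖f (n + 1) (Submodule.inclusion (hA (Nat.le_succ n)) a) - f n a‖ ≤ δ n * ‖a‖) :
    ∃ F : X →L[ℝ] Z,
      (∀ x : X, ‖F x‖ ≤ ‖x‖) ∧
      (∀ m (a : A m),
        Tendsto (fun k : ℕ =>
            f (m + k) (Submodule.inclusion (hA (Nat.le_add_right m k)) a))
          atTop (𝓝 (F (a : X)))) ∧
      (∀ G : X →L[ℝ] Z, (∀ x : X, ‖G x‖ ≤ ‖x‖) →
        (∀ m (a : A m),
          Tendsto (fun k : ℕ =>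
              f (m + k) (Submodule.inclusion (hA (Nat.le_add_right m k)) a))
            atTop (𝓝 (G (a : X)))) → G = F) ∧
      (Tendsto (fun n => (∑' k, δ (n + k)) + ε n) atTop (𝓝 0) →
        ∀ x : X, ‖F x‖ = ‖x‖) := by
  obtain ⟨F, hFnorm, hFlim⟩ := exists_continuousLinearMap_tendsto_of_chain hA hAdense f hfnorm
    fun m a => cauchySeq_tendsto_of_complete (cauchySeq_chain hA hfstep hδsum a)
  refine ⟨F, hFnorm, hFlim, fun G _ hGlim => ?_, fun htail x => ?_⟩
  · refine ContinuousLinearMap.coeFn_injective <|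
      Continuous.ext_on hAdense G.continuous F.continuous fun x hx => ?_
    obtain ⟨m, hm⟩ := Set.mem_iUnion.1 hx
    exact tendsto_nhds_unique (hGlim m ⟨x, hm⟩) (hFlim m ⟨x, hm⟩)
  · refine hAdense.induction (P := fun x => ‖F x‖ = ‖x‖) (fun x hx => ?_)
      (isClosed_eq (by fun_prop) (by fun_prop)) x
    obtain ⟨m, hm⟩ := Set.mem_iUnion.1 hx
    exact (hFnorm x).antisymm
      (norm_le_of_tendsto_chain hA hfstep hδsum hfiso htail hFlim ⟨x, hm⟩)

/-- a Cauchy chain of 1-bounded ε_n-isometries on a dense chain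
of subspaces has a unique 1-bounded pointwise limit F : X → Z; if moreover the
tail errors Σ_{k≥n} δ_k + ε_n tend to 0, then F is an isometric embedding. -/
theorem stmt_18 {X Z : Type*} [NormedAddCommGroup X] [NormedSpace ℝ X]
    [CompleteSpace X] [NormedAddCommGroup Z] [NormedSpace ℝ Z] [CompleteSpace Z]
    (ε δ : ℕ → ℝ) (hεpos : ∀ n, 0 ≤ ε n) (hδpos : ∀ n, 0 ≤ δ n)
    (hε0 : Tendsto ε atTop (𝓝 0)) (hδsum : Summable δ)
    (A : ℕ → Submodule ℝ X) (hA : Monotone A)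
    (hAdense : Dense (⋃ n, (A n : Set X)))
    (f : ∀ n, A n →ₗ[ℝ] Z)
    (hfnorm : ∀ n (a : A n), ‖f n a‖ ≤ ‖a‖)
    (hfiso : ∀ n (a : A n), (1 - ε n) * ‖a‖ ≤ ‖f n a‖)
    (hfstep : ∀ n (a : A n),
      ‖f (n + 1) (Submodule.inclusion (hA (Nat.le_succ n)) a) - f n a‖ ≤ δ n * ‖a‖) :
    ∃ F : X →L[ℝ] Z,
      (∀ x : X, ‖F x‖ ≤ ‖x‖) ∧
      (∀ m (a : A m),
        Tendsto (fun k : ℕ =>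
            f (m + k) (Submodule.inclusion (hA (Nat.le_add_right m k)) a))
          atTop (𝓝 (F (a : X)))) ∧
      (∀ G : X →L[ℝ] Z, (∀ x : X, ‖G x‖ ≤ ‖x‖) →
        (∀ m (a : A m),
          Tendsto (fun k : ℕ =>
              f (m + k) (Submodule.inclusion (hA (Nat.le_add_right m k)) a))
            atTop (𝓝 (G (a : X)))) → G = F) ∧
      (Tendsto (fun n => (∑' k, δ (n + k)) + ε n) atTop (𝓝 0) →
        ∀ x : X, ‖F x‖ = ‖x‖) :=
  stmt_18_general ε δ hδsum A hA hAdense f hfnorm hfiso hfstep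
end

section
/- Let Ef be a countable category with the amalgamation property and an initial object, and realize sequences in Ef as a closed subset S of the Polish product space Ef^Δ. Then the set of Fraïssé sequences, i.e. sequences u such that for every n and every arrow f : u_n → b there exist m > n and g : b → u_m with g∘f equal to the bonding arrow u_n → u_m, is comeager in S; in particular a Fraïssé sequence exists. -/
open CategoryTheory

set_option linter.unusedSectionVars false

namespace Stmt19


variable {C : Type} [SmallCategory C]

theorem tri_eq {a b a' b' : C} (f : a ⟶ b) (f' : a' ⟶ b') (h1 : a = a') (h2 : b = b')
    (hf : f = eqToHom h1 ≫ f' ≫ eqToHom h2.symm) :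
    (⟨a, b, f⟩ : Σ a b : C, a ⟶ b) = ⟨a', b', f'⟩ := by
  subst h1; subst h2; simpa using hf

theorem tri_obj₁ {a b a' b' : C} {f : a ⟶ b} {f' : a' ⟶ b'}
    (h : (⟨a, b, f⟩ : Σ a b : C, a ⟶ b) = ⟨a', b', f'⟩) : a = a' :=
  congrArg Sigma.fst h

theorem tri_obj₂ {a b a' b' : C} {f : a ⟶ b} {f' : a' ⟶ b'}
    (h : (⟨a, b, f⟩ : Σ a b : C, a ⟶ b) = ⟨a', b', f'⟩) : b = b' :=
  congrArg (fun t => t.2.1) h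

theorem tri_hom {a b a' b' : C} {f : a ⟶ b} {f' : a' ⟶ b'}
    (h : (⟨a, b, f⟩ : Σ a b : C, a ⟶ b) = ⟨a', b', f'⟩) (h1 : a = a') (h2 : b = b') :
    f = eqToHom h1 ≫ f' ≫ eqToHom h2.symm := by
  subst h1; subst h2
  have := (Sigma.mk.inj_iff.mp h).2
  have := (Sigma.mk.inj_iff.mp (eq_of_heq this)).2
  simpa using eq_of_heq this

theorem map_eq_of_agree (u v : ℕ ⥤ C) (k : ℕ)
    (hobj : ∀ j, j ≤ k → u.obj j = v.obj j)
    (hsucc : ∀ i (hi : i + 1 ≤ k),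
      u.map (homOfLE (Nat.le_add_right i 1)) =
        eqToHom (hobj i (by omega)) ≫ v.map (homOfLE (Nat.le_add_right i 1)) ≫
          eqToHom (hobj (i+1) hi).symm) :
    ∀ n m (hnm : n ≤ m) (hm : m ≤ k),
      u.map (homOfLE hnm) = eqToHom (hobj n (hnm.trans hm)) ≫ v.map (homOfLE hnm) ≫
        eqToHom (hobj m hm).symm := by
  intro n m
  induction m with
  | zero =>
    intro hnm hm
    obtain rfl : n = 0 := Nat.le_zero.mp hnm
    rw [show homOfLE hnm = 𝟙 0 from rfl]
    simp
  | succ m ih =>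
    intro hnm hm
    rcases Nat.lt_or_ge n (m+1) with h | h
    · have h1 : n ≤ m := by omega
      rw [show homOfLE hnm = homOfLE h1 ≫ homOfLE (Nat.le_add_right m 1) from
        (homOfLE_comp h1 (Nat.le_add_right m 1)).symm]
      rw [Functor.map_comp, Functor.map_comp, ih h1 (by omega), hsucc m hm]
      simp
    · obtain rfl : n = m + 1 := by omega
      rw [show homOfLE hnm = 𝟙 (m+1) from rfl]
      simp

theorem exists_extend
    (hamalg : ∀ (a b c : C) (f : a ⟶ b) (g : a ⟶ c),
      ∃ (d : C) (f' : b ⟶ d) (g' : c ⟶ d), f ≫ f' = g ≫ g')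
    (u : ℕ ⥤ C) (k n : ℕ) (hn : n ≤ k) (b : C) (f : u.obj n ⟶ b) :
    ∃ (u' : ℕ ⥤ C) (hobj : ∀ j, j ≤ k → u'.obj j = u.obj j),
      (∀ i j (hij : i ≤ j) (hj : j ≤ k),
        u'.map (homOfLE hij) = eqToHom (hobj i (hij.trans hj)) ≫ u.map (homOfLE hij) ≫
          eqToHom (hobj j hj).symm) ∧
      ∃ g : b ⟶ u'.obj (k+1),
        (eqToHom (hobj n hn) ≫ f) ≫ g = u'.map (homOfLE (by omega : n ≤ k+1)) := by
  classical
  obtain ⟨d, p, q, hpq⟩ := hamalg (u.obj n) b (u.obj k) f (u.map (homOfLE hn))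
  set X' : ℕ → C := fun j => if j ≤ k then u.obj j else d with hX'
  have hX1 : ∀ j, j ≤ k → X' j = u.obj j := fun j hj => if_pos hj
  have hX2 : ∀ j, k < j → X' j = d := fun j hj => if_neg (by omega)
  have hkk : ∀ i, ¬ (i + 1 ≤ k) → i ≤ k → u.obj i = u.obj k := by
    intro i h1 h2; congr 1; omega
  let s' : ∀ i, X' i ⟶ X' (i+1) := fun i =>
    if h1 : i + 1 ≤ k then
      eqToHom (hX1 i (by omega)) ≫ u.map (homOfLE (Nat.le_add_right i 1)) ≫
        eqToHom (hX1 (i+1) h1).symm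
    else if h2 : i ≤ k then
      eqToHom (hX1 i h2) ≫ (eqToHom (hkk i h1 h2) ≫ q) ≫ eqToHom (hX2 (i+1) (by omega)).symm
    else
      eqToHom (hX2 i (by omega)) ≫ 𝟙 d ≫ eqToHom (hX2 (i+1) (by omega)).symm
  let u' : ℕ ⥤ C := Functor.ofSequence s'
  have hobj : ∀ j, j ≤ k → u'.obj j = u.obj j := fun j hj => hX1 j hj
  have hsucc : ∀ i (hi : i + 1 ≤ k),
      u'.map (homOfLE (Nat.le_add_right i 1)) =
        eqToHom (hobj i (by omega)) ≫ u.map (homOfLE (Nat.le_add_right i 1)) ≫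
          eqToHom (hobj (i+1) hi).symm := by
    intro i hi
    rw [show u'.map (homOfLE (Nat.le_add_right i 1)) = s' i from
      Functor.ofSequence_map_homOfLE_succ s' i]
    simp only [s', dif_pos hi]
    rfl
  have hmap := map_eq_of_agree u' u k hobj hsucc
  refine ⟨u', hobj, fun i j hij hj => hmap i j hij hj, ?_⟩
  have hsk : u'.map (homOfLE (Nat.le_add_right k 1)) = s' k :=
    Functor.ofSequence_map_homOfLE_succ s' k
  have hsk' : s' k = eqToHom (hX1 k le_rfl) ≫ q ≫ eqToHom (hX2 (k+1) (by omega)).symm := by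
    simp only [s', dif_neg (by omega : ¬ (k + 1 ≤ k)), dif_pos le_rfl]
    simp
  refine ⟨p ≫ eqToHom (hX2 (k+1) (by omega)).symm, ?_⟩
  have hcomp : u'.map (homOfLE (by omega : n ≤ k+1)) =
      u'.map (homOfLE hn) ≫ u'.map (homOfLE (Nat.le_add_right k 1)) := by
    rw [← Functor.map_comp]
    congr 1
  rw [hcomp, hmap n k hn le_rfl, hsk, hsk']
  simp only [Category.assoc, eqToHom_trans_assoc, eqToHom_refl, Category.id_comp]
  rw [reassoc_of% hpq]
  erw [Category.assoc, Category.assoc, eqToHom_trans_assoc, eqToHom_refl, Category.id_comp]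
  rfl

theorem map_congr_idx (F : ℕ ⥤ C) {i i' j j' : ℕ} (hi : i = i') (hj : j = j')
    (a : i ≤ j) (a' : i' ≤ j') :
    F.map (homOfLE a) = eqToHom (by rw [hi]) ≫ F.map (homOfLE a') ≫ eqToHom (by rw [hj]) := by
  subst hi; subst hj; simp

variable (hamalg : ∀ (a b c : C) (f : a ⟶ b) (g : a ⟶ c),
      ∃ (d : C) (f' : b ⟶ d) (g' : c ⟶ d), f ≫ f' = g ≫ g')

open scoped Classical in
/-- the recursively constructed chain of sequences -/
noncomputable def St (z : C) (e : ℕ → ℕ × Σ a b : C, a ⟶ b) : ℕ → ℕ ⥤ C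
  | 0 => (Functor.const ℕ).obj z
  | (k+1) =>
    let u := St z e k
    if h : (e k).1 ≤ k ∧ (e k).2.1 = u.obj (e k).1 then
      (exists_extend hamalg u k (e k).1 h.1 (e k).2.2.1
        (eqToHom h.2.symm ≫ (e k).2.2.2)).choose
    else u

theorem exists_fraisse [Countable C] [∀ a b : C, Countable (a ⟶ b)]
    (hamalg : ∀ (a b c : C) (f : a ⟶ b) (g : a ⟶ c),
      ∃ (d : C) (f' : b ⟶ d) (g' : c ⟶ d), f ≫ f' = g ≫ g') (z : C) :
    ∃ u : ℕ ⥤ C, ∀ (n : ℕ) (b : C) (f : u.obj n ⟶ b),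
      ∃ (m : ℕ) (hm : n < m) (g : b ⟶ u.obj m),
        f ≫ g = u.map (homOfLE hm.le) := by
  classical
  haveI : Nonempty (ℕ × Σ a b : C, a ⟶ b) := ⟨(0, ⟨z, z, 𝟙 z⟩)⟩
  obtain ⟨e0, he0⟩ := exists_surjective_nat (ℕ × Σ a b : C, a ⟶ b)
  set e : ℕ → ℕ × Σ a b : C, a ⟶ b := fun k => e0 (Nat.unpair k).2 with he
  set S : ℕ → ℕ ⥤ C := St hamalg z e with hS
  -- one-step stability
  have hstep : ∀ k, ∀ i j (hij : i ≤ j), j ≤ k →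
      (⟨(S (k+1)).obj i, (S (k+1)).obj j, (S (k+1)).map (homOfLE hij)⟩ : Σ a b : C, a ⟶ b)
        = ⟨(S k).obj i, (S k).obj j, (S k).map (homOfLE hij)⟩ := by
    intro k i j hij hj
    show (⟨(St hamalg z e (k+1)).obj i, (St hamalg z e (k+1)).obj j,
        (St hamalg z e (k+1)).map (homOfLE hij)⟩ : Σ a b : C, a ⟶ b) = _
    simp only [St]
    by_cases h : (e k).1 ≤ k ∧ (e k).2.1 = (St hamalg z e k).obj (e k).1
    · rw [dif_pos h]
      obtain ⟨hobj, hmap, -⟩ := (exists_extend hamalg (St hamalg z e k) k (e k).1 h.1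
        (e k).2.2.1 (eqToHom h.2.symm ≫ (e k).2.2.2)).choose_spec
      exact tri_eq _ _ (hobj i (hij.trans hj)) (hobj j hj) (hmap i j hij hj)
    · rw [dif_neg h]
  have hstab : ∀ k k', k ≤ k' → ∀ i j (hij : i ≤ j), j ≤ k →
      (⟨(S k').obj i, (S k').obj j, (S k').map (homOfLE hij)⟩ : Σ a b : C, a ⟶ b)
        = ⟨(S k).obj i, (S k).obj j, (S k).map (homOfLE hij)⟩ := by
    intro k k' hk
    induction k' with
    | zero =>
      obtain rfl : k = 0 := by omega
      intro i j hij hj; rfl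
    | succ k' ih =>
      rcases Nat.lt_or_ge k (k'+1) with h | h
      · intro i j hij hj
        exact (hstep k' i j hij (by omega)).trans (ih (by omega) i j hij hj)
      · obtain rfl : k = k' + 1 := by omega
        intro i j hij hj; rfl
  have hobjstab : ∀ k k', k ≤ k' → ∀ j, j ≤ k → (S k').obj j = (S k).obj j := by
    intro k k' hk j hj
    exact tri_obj₁ (hstab k k' hk j j le_rfl hj)
  let Xf : ℕ → C := fun n => (S n).obj n
  let sf : ∀ n, Xf n ⟶ Xf (n+1) := fun n =>
    eqToHom (hobjstab n (n+1) (Nat.le_succ n) n le_rfl).symm ≫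
      (S (n+1)).map (homOfLE (Nat.le_add_right n 1))
  let U : ℕ ⥤ C := Functor.ofSequence sf
  have hUobj : ∀ k n, n ≤ k → U.obj n = (S k).obj n := fun k n hn =>
    (hobjstab n k hn n le_rfl).symm
  have hUmap : ∀ k n m (hnm : n ≤ m) (hm : m ≤ k),
      U.map (homOfLE hnm) = eqToHom (hUobj k n (hnm.trans hm)) ≫ (S k).map (homOfLE hnm) ≫
        eqToHom (hUobj k m hm).symm := by
    intro k
    refine map_eq_of_agree (C := C) U (S k) k (fun j hj => hUobj k j hj) ?_
    intro i hi
    rw [show U.map (homOfLE (Nat.le_add_right i 1)) = sf i from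
      Functor.ofSequence_map_homOfLE_succ (C := C) (X := Xf) sf i]
    have ht := hstab (i+1) k hi i (i+1) (Nat.le_succ i) le_rfl
    have e1 := tri_obj₁ ht
    have e2 := tri_obj₂ ht
    have hmm := tri_hom ht e1 e2
    rw [hmm]
    simp [sf, eqToHom_trans_assoc]
    erw [eqToHom_refl, Category.comp_id]
    rfl
  refine ⟨U, ?_⟩
  intro n b f
  obtain ⟨j, hj⟩ := he0 (n, ⟨U.obj n, b, f⟩)
  set k := Nat.pair n j with hk
  have hek : e k = (n, ⟨U.obj n, b, f⟩) := by
    simp only [he, hk, Nat.unpair_pair]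
    exact hj
  have hnk : n ≤ k := Nat.left_le_pair n j
  have hobjn : U.obj n = (S k).obj n := hUobj k n hnk
  have hcond : (e k).1 ≤ k ∧ (e k).2.1 = (S k).obj (e k).1 := by
    rw [hek]; exact ⟨hnk, hobjn⟩
  set E := exists_extend hamalg (S k) k (e k).1 hcond.1 (e k).2.2.1
    (eqToHom hcond.2.symm ≫ (e k).2.2.2) with hE
  have hSk1 : S (k+1) = E.choose := by
    show St hamalg z e (k+1) = _
    simp only [St]
    rw [dif_pos hcond]
  obtain ⟨hobj, hmap2, g, hg⟩ := E.choose_spec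
  have c1 : (e k).1 = n := by rw [hek]
  have c2 : (e k).2 = ⟨U.obj n, b, f⟩ := by rw [hek]
  have d1 : (e k).2.1 = U.obj n := tri_obj₁ c2
  have d2 : (e k).2.2.1 = b := tri_obj₂ c2
  have dhom := tri_hom c2 d1 d2
  have hn' : n ≤ k + 1 := by omega
  have hx : (e k).1 ≤ k + 1 := by omega
  have htr : (⟨(S (k+1)).obj n, (S (k+1)).obj (k+1), (S (k+1)).map (homOfLE hn')⟩
      : Σ a b : C, a ⟶ b) = ⟨E.choose.obj n, E.choose.obj (k+1), E.choose.map (homOfLE hn')⟩ := by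
    rw [hSk1]
  have e1 := tri_obj₁ htr
  have e2 := tri_obj₂ htr
  have ehom := tri_hom htr e1 e2
  have hidx := map_congr_idx E.choose c1.symm rfl hn' hx
  have hOK : E.choose.obj (k+1) = U.obj (k+1) := (congrArg (fun F => F.obj (k+1)) hSk1).symm
  refine ⟨k+1, by omega, eqToHom d2.symm ≫ g ≫ eqToHom hOK, ?_⟩
  rw [hUmap (k+1) n (k+1) hn' le_rfl, ehom, hidx, ← hg]
  simp only [dhom]
  simp [eqToHom_trans_assoc]

/-- the encoding of sequences as points of the product space -/
def encF (C : Type) [SmallCategory C] :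
    (ℕ ⥤ C) → ({p : ℕ × ℕ // p.1 ≤ p.2} → Σ a b : C, a ⟶ b) :=
  fun u p => ⟨u.obj p.1.1, u.obj p.1.2, u.map (homOfLE p.2)⟩

section Topo

variable [TopologicalSpace (Σ a b : C, a ⟶ b)] [DiscreteTopology (Σ a b : C, a ⟶ b)]

/-- the basic dense open sets -/
def Vset (n : ℕ) (σ : Σ a b : C, a ⟶ b) : Set ↥(Set.range (encF C)) :=
  {x | ∀ u : ℕ ⥤ C, encF C u = (x : {p : ℕ × ℕ // p.1 ≤ p.2} → Σ a b : C, a ⟶ b) →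
    ∀ h : σ.1 = u.obj n, ∃ (m : ℕ) (hm : n < m) (g : σ.2.1 ⟶ u.obj m),
      (eqToHom h.symm ≫ σ.2.2) ≫ g = u.map (homOfLE hm.le)}

theorem basic_mem_nhds (x : ↥(Set.range (encF C))) (F : Finset {p : ℕ × ℕ // p.1 ≤ p.2}) :
    {y : ↥(Set.range (encF C)) | ∀ p ∈ F,
      (y : {p : ℕ × ℕ // p.1 ≤ p.2} → Σ a b : C, a ⟶ b) p
        = (x : {p : ℕ × ℕ // p.1 ≤ p.2} → Σ a b : C, a ⟶ b) p} ∈ nhds x := by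
  have hO : IsOpen {y : {p : ℕ × ℕ // p.1 ≤ p.2} → Σ a b : C, a ⟶ b | ∀ p ∈ F,
      y p = (x : {p : ℕ × ℕ // p.1 ≤ p.2} → Σ a b : C, a ⟶ b) p} := by
    have heq : {y : {p : ℕ × ℕ // p.1 ≤ p.2} → Σ a b : C, a ⟶ b | ∀ p ∈ F,
        y p = (x : {p : ℕ × ℕ // p.1 ≤ p.2} → Σ a b : C, a ⟶ b) p}
        = Set.pi (↑F) (fun p => {(x : {p : ℕ × ℕ // p.1 ≤ p.2} → Σ a b : C, a ⟶ b) p}) := by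
      ext y; simp [Set.mem_pi]
    rw [heq]
    exact isOpen_set_pi F.finite_toSet (fun a _ => isOpen_discrete _)
  exact (hO.preimage continuous_subtype_val).mem_nhds (by simp)

theorem V_open (n : ℕ) (σ : Σ a b : C, a ⟶ b) : IsOpen (Vset (C := C) n σ) := by
  rw [isOpen_iff_mem_nhds]
  intro x hx
  obtain ⟨u0, hu0⟩ := x.2
  by_cases hσ : σ.1 = u0.obj n
  · obtain ⟨m, hm, g, hg⟩ := hx u0 hu0 hσ
    refine Filter.mem_of_superset (basic_mem_nhds x {⟨(n, m), hm.le⟩}) ?_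
    intro y hy v hv h'
    have hco : encF C v ⟨(n, m), hm.le⟩ = encF C u0 ⟨(n, m), hm.le⟩ := by
      rw [hv, hu0]
      exact hy ⟨(n, m), hm.le⟩ (Finset.mem_singleton_self _)
    have e1 : v.obj n = u0.obj n := tri_obj₁ hco
    have e2 : v.obj m = u0.obj m := tri_obj₂ hco
    have ehom := tri_hom hco e1 e2
    refine ⟨m, hm, g ≫ eqToHom e2.symm, ?_⟩
    rw [ehom, ← hg]
    simp [eqToHom_trans_assoc]
  · refine Filter.mem_of_superset (basic_mem_nhds x {⟨(n, n), le_rfl⟩}) ?_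
    intro y hy v hv h'
    exfalso
    have hco : encF C v ⟨(n, n), le_rfl⟩ = encF C u0 ⟨(n, n), le_rfl⟩ := by
      rw [hv, hu0]
      exact hy ⟨(n, n), le_rfl⟩ (Finset.mem_singleton_self _)
    exact hσ (h'.trans (tri_obj₁ hco))

theorem V_dense
    (hamalg : ∀ (a b c : C) (f : a ⟶ b) (g : a ⟶ c),
      ∃ (d : C) (f' : b ⟶ d) (g' : c ⟶ d), f ≫ f' = g ≫ g')
    (n : ℕ) (σ : Σ a b : C, a ⟶ b) : Dense (Vset (C := C) n σ) := by
  rw [dense_iff_inter_open]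
  intro O hO hOne
  obtain ⟨O', hO', rfl⟩ := isOpen_induced_iff.mp hO
  obtain ⟨x, hxO⟩ := hOne
  obtain ⟨u0, hu0⟩ := x.2
  obtain ⟨I, w, hw, hbox⟩ := isOpen_pi_iff.mp hO'
    (x : {p : ℕ × ℕ // p.1 ≤ p.2} → Σ a b : C, a ⟶ b) hxO
  by_cases hσ : σ.1 = u0.obj n
  · obtain ⟨k, hnk, hIk⟩ : ∃ k, n ≤ k ∧ ∀ p ∈ I, p.val.2 ≤ k :=
      ⟨n + I.sup (fun p => p.val.2), Nat.le_add_right _ _,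
        fun p hp => by
          have := Finset.le_sup (f := fun p : {p : ℕ × ℕ // p.1 ≤ p.2} => p.val.2) hp
          exact le_trans this (Nat.le_add_left _ _)⟩
    obtain ⟨u', hobj, hmap, g, hg⟩ := exists_extend hamalg u0 k n hnk σ.2.1
      (eqToHom hσ.symm ≫ σ.2.2)
    refine ⟨⟨encF C u', ⟨u', rfl⟩⟩, ?_, ?_⟩
    · show encF C u' ∈ O'
      apply hbox
      intro p hp
      have hj : p.val.2 ≤ k := hIk p hp
      have hagree : encF C u' p = (x : {p : ℕ × ℕ // p.1 ≤ p.2} → Σ a b : C, a ⟶ b) p := by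
        rw [← hu0]
        exact tri_eq _ _ (hobj p.val.1 (le_trans p.2 hj)) (hobj p.val.2 hj)
          (hmap p.val.1 p.val.2 p.2 hj)
      rw [hagree]
      exact (hw p hp).2
    · intro v hv h'
      have hco : encF C v ⟨(n, k+1), by omega⟩ = encF C u' ⟨(n, k+1), by omega⟩ :=
        congrFun hv _
      have e1 : v.obj n = u'.obj n := tri_obj₁ hco
      have e2 : v.obj (k+1) = u'.obj (k+1) := tri_obj₂ hco
      have ehom := tri_hom hco e1 e2
      refine ⟨k+1, by omega, g ≫ eqToHom e2.symm, ?_⟩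
      rw [ehom, ← hg]
      simp [eqToHom_trans_assoc]
  · refine ⟨x, hxO, ?_⟩
    intro v hv h'
    exfalso
    have hco : encF C v ⟨(n, n), le_rfl⟩ = encF C u0 ⟨(n, n), le_rfl⟩ := by
      rw [hv, hu0]
    exact hσ (h'.trans (tri_obj₁ hco))

theorem part2 [Countable C] [∀ a b : C, Countable (a ⟶ b)]
    (hamalg : ∀ (a b c : C) (f : a ⟶ b) (g : a ⟶ c),
      ∃ (d : C) (f' : b ⟶ d) (g' : c ⟶ d), f ≫ f' = g ≫ g') :
    {x : Set.range (encF C) | ∀ u : ℕ ⥤ C,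
        encF C u = (x : {p : ℕ × ℕ // p.1 ≤ p.2} → Σ a b : C, a ⟶ b) →
        ∀ (n : ℕ) (b : C) (f : u.obj n ⟶ b),
          ∃ (m : ℕ) (hm : n < m) (g : b ⟶ u.obj m),
            f ≫ g = u.map (homOfLE hm.le)}
      ∈ residual ↥(Set.range (encF C)) := by
  have hsub : (⋂ q : ℕ × Σ a b : C, a ⟶ b, Vset (C := C) q.1 q.2) ⊆
      {x : Set.range (encF C) | ∀ u : ℕ ⥤ C,
        encF C u = (x : {p : ℕ × ℕ // p.1 ≤ p.2} → Σ a b : C, a ⟶ b) →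
        ∀ (n : ℕ) (b : C) (f : u.obj n ⟶ b),
          ∃ (m : ℕ) (hm : n < m) (g : b ⟶ u.obj m),
            f ≫ g = u.map (homOfLE hm.le)} := by
    intro x hx u hu n b f
    obtain ⟨m, hm, g, hg⟩ := Set.mem_iInter.mp hx (n, ⟨u.obj n, b, f⟩) u hu rfl
    exact ⟨m, hm, g, by simpa using hg⟩
  refine Filter.mem_of_superset (countable_iInter_mem.mpr ?_) hsub
  intro q
  exact residual_of_dense_open (V_open q.1 q.2) (V_dense hamalg q.1 q.2)

end Topo
end Stmt19

/-- in a countable category with the amalgamation property and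
an initial object, a Fraïssé sequence exists; moreover, identifying sequences
(functors ℕ ⥤ C) with points of a product of countable discrete spaces, the
set of (codes of) Fraïssé sequences is comeager in the space S of all
sequences. -/
theorem stmt_19 (C : Type) [SmallCategory C] [Countable C]
    [∀ a b : C, Countable (a ⟶ b)]
    (hamalg : ∀ (a b c : C) (f : a ⟶ b) (g : a ⟶ c),
      ∃ (d : C) (f' : b ⟶ d) (g' : c ⟶ d), f ≫ f' = g ≫ g')
    (hinit : ∃ z : C, Nonempty (Limits.IsInitial z)) :
    (∃ u : ℕ ⥤ C, ∀ (n : ℕ) (b : C) (f : u.obj n ⟶ b),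
      ∃ (m : ℕ) (hm : n < m) (g : b ⟶ u.obj m),
        f ≫ g = u.map (homOfLE hm.le)) ∧
    (letI : TopologicalSpace (Σ a b : C, a ⟶ b) := ⊥
     ∀ enc : (ℕ ⥤ C) → ({p : ℕ × ℕ // p.1 ≤ p.2} → Σ a b : C, a ⟶ b),
      (enc = fun u p => ⟨u.obj p.1.1, u.obj p.1.2, u.map (homOfLE p.2)⟩) →
      {x : Set.range enc | ∀ u : ℕ ⥤ C, enc u = (x : {p : ℕ × ℕ // p.1 ≤ p.2} → Σ a b : C, a ⟶ b) →
          ∀ (n : ℕ) (b : C) (f : u.obj n ⟶ b),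
            ∃ (m : ℕ) (hm : n < m) (g : b ⟶ u.obj m),
              f ≫ g = u.map (homOfLE hm.le)}
        ∈ residual (Set.range enc)) := by
  obtain ⟨z, -⟩ := hinit
  refine ⟨Stmt19.exists_fraisse hamalg z, ?_⟩
  intro enc henc
  subst henc
  letI : TopologicalSpace (Σ a b : C, a ⟶ b) := ⊥
  haveI : DiscreteTopology (Σ a b : C, a ⟶ b) := ⟨rfl⟩
  exact Stmt19.part2 hamalg
end
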